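/- arXiv:2212.01438 — 9 statements merged into one kernel-verified Lean document; each statement's English description precedes it below -/
import Mathlib

section
/- Let a, v ∈ ℝⁿ (n ≥ 2) and assume all components of v are non-zero. Then there exists a unique t ∈ ℝ minimizing the function u ↦ ‖a - u·v‖_∞ over ℝ. -/
open Filter

/-- A vector is Chebyshev if all of its components are non-zero. -/
def Cheb {n : ℕ} (v : Fin n → ℝ) : Prop := ∀ i, v i ≠ 0

/-- `mu a v` is the (unique, when `v` is Chebyshev) minimizer of `u ↦ ‖a - u • v‖`,
where `‖·‖` is the sup-norm on `Fin n → ℝ`. -/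
noncomputable def mu {n : ℕ} (a v : Fin n → ℝ) : ℝ :=
  Classical.epsilon fun t : ℝ => ∀ u : ℝ, ‖a - t • v‖ ≤ ‖a - u • v‖

noncomputable def phi {m n : ℕ} (A : Fin m → Fin n → ℝ) (v : Fin n → ℝ) : Fin m → ℝ :=
  fun i => mu (A i) v

noncomputable def psi {m n : ℕ} (A : Fin m → Fin n → ℝ) (u : Fin m → ℝ) : Fin n → ℝ :=
  fun j => mu (fun i => A i j) u

/-- `A` preserves Chebyshev systems. -/
def PreservesCheb {m n : ℕ} (A : Fin m → Fin n → ℝ) : Prop :=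
  (∀ v : Fin n → ℝ, Cheb v → Cheb (phi A v)) ∧ (∀ u : Fin m → ℝ, Cheb u → Cheb (psi A u))

/-- A vector is alternance-free if exactly one component attains the max absolute value. -/
def AlternanceFree {n : ℕ} (a : Fin n → ℝ) : Prop := ∃! i, |a i| = ‖a‖

/-- Chebyshev norm of the residual `A - u vᵀ`. -/
noncomputable def Cerr {m n : ℕ} (A : Fin m → Fin n → ℝ) (u : Fin m → ℝ) (v : Fin n → ℝ) : ℝ :=
  ⨆ i, ⨆ j, |A i j - u i * v j|

/-- Chebyshev norm of a matrix. -/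
noncomputable def CnormM {m n : ℕ} (A : Fin m → Fin n → ℝ) : ℝ :=
  ⨆ i, ⨆ j, |A i j|

/-- The sequence `v⁽ᵏ⁾` of the alternating minimization method started at `v0`. -/
noncomputable def vseq {m n : ℕ} (A : Fin m → Fin n → ℝ) (v0 : Fin n → ℝ) : ℕ → Fin n → ℝ
  | 0 => v0
  | k + 1 => psi A (phi A (vseq A v0 k))

/-
The residual `u ↦ ‖a - u • v‖` is continuous and coercive, so it attains its minimum. If `s ≠ t`
were two minimizers, the residuals at `s` and `t` would differ in every coordinate because no
`v i` vanishes; strict convexity of each coordinate space then makes the residual at `(s + t) / 2`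
strictly smaller in every coordinate, hence in the sup-norm, since there are finitely many.
-/

section Residual

variable {E : Type*} [NormedAddCommGroup E] [NormedSpace ℝ E]

lemma tendsto_norm_sub_smul_cocompact (a : E) {v : E} (hv : v ≠ 0) :
    Tendsto (fun u : ℝ => ‖a - u • v‖) (cocompact ℝ) atTop := by
  have hlin : Tendsto (fun u : ℝ => ‖u‖ * ‖v‖ - ‖a‖) (cocompact ℝ) atTop :=
    tendsto_atTop_add_const_right _ _
      (tendsto_norm_cocompact_atTop.atTop_mul_const (norm_pos_iff.2 hv))
  refine tendsto_atTop_mono (fun u => ?_) hlin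
  calc ‖u‖ * ‖v‖ - ‖a‖ = ‖u • v‖ - ‖a‖ := by rw [norm_smul]
    _ ≤ ‖a - u • v‖ := by
      linarith [norm_sub_norm_le (u • v) a, norm_sub_rev (u • v) a]

lemma exists_forall_norm_sub_smul_le (a : E) {v : E} (hv : v ≠ 0) :
    ∃ t : ℝ, ∀ u : ℝ, ‖a - t • v‖ ≤ ‖a - u • v‖ :=
  (by fun_prop : Continuous fun u : ℝ => ‖a - u • v‖).exists_forall_le
    (tendsto_norm_sub_smul_cocompact a hv)

end Residual

section SupNorm

variable {ι E : Type*} [Fintype ι] [Nonempty ι] [NormedAddCommGroup E] [NormedSpace ℝ E]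
  [StrictConvexSpace ℝ E]

lemma pi_norm_midpoint_lt_of_forall_ne {x y : ι → E} {r : ℝ} (hx : ‖x‖ ≤ r) (hy : ‖y‖ ≤ r)
    (hxy : ∀ i, x i ≠ y i) : ‖(1 / 2 : ℝ) • x + (1 / 2 : ℝ) • y‖ < r := by
  have hcoord (i : ι) : ‖(1 / 2 : ℝ) • x i + (1 / 2 : ℝ) • y i‖ < r :=
    norm_combo_lt_of_ne ((norm_le_pi_norm x i).trans hx) ((norm_le_pi_norm y i).trans hy)
      (hxy i) one_half_pos one_half_pos (add_halves 1)
  have hr : 0 < r := (norm_nonneg _).trans_lt (hcoord (Classical.arbitrary ι))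
  exact (pi_norm_lt_iff hr).2 hcoord

lemma eq_of_forall_norm_sub_smul_le {a v : ι → E} (hv : ∀ i, v i ≠ 0) {s t : ℝ}
    (hs : ∀ u : ℝ, ‖a - s • v‖ ≤ ‖a - u • v‖) (ht : ∀ u : ℝ, ‖a - t • v‖ ≤ ‖a - u • v‖) :
    s = t := by
  by_contra hst
  have hne (i : ι) : (a - s • v) i ≠ (a - t • v) i := fun h =>
    hst (smul_left_injective ℝ (hv i) (by simpa using h))
  have hmid : a - ((s + t) / 2) • v = (1 / 2 : ℝ) • (a - s • v) + (1 / 2 : ℝ) • (a - t • v) := by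
    module
  have hlt : ‖a - ((s + t) / 2) • v‖ < ‖a - s • v‖ :=
    hmid ▸ pi_norm_midpoint_lt_of_forall_ne le_rfl (ht s) hne
  exact (hs _).not_gt hlt

theorem existsUnique_forall_norm_sub_smul_le (a : ι → E) {v : ι → E} (hv : ∀ i, v i ≠ 0) :
    ∃! t : ℝ, ∀ u : ℝ, ‖a - t • v‖ ≤ ‖a - u • v‖ := by
  have hv0 : v ≠ 0 := fun h => hv (Classical.arbitrary ι) (congrFun h _)
  obtain ⟨t, ht⟩ := exists_forall_norm_sub_smul_le a hv0
  exact ⟨t, ht, fun s hs => eq_of_forall_norm_sub_smul_le hv hs ht⟩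

end SupNorm

theorem stmt0 {n : ℕ} (hn : 2 ≤ n) (a v : Fin n → ℝ) (hv : Cheb v) :
    ∃! t : ℝ, ∀ u : ℝ, ‖a - t • v‖ ≤ ‖a - u • v‖ :=
  have : Nonempty (Fin n) := ⟨⟨0, by omega⟩⟩
  existsUnique_forall_norm_sub_smul_le a hv
end

section
/- Let a, v ∈ ℝⁿ (n ≥ 2) with all components of v non-zero. A real number u minimizes t ↦ ‖a - t·v‖_∞ if and only if there exist distinct indices i, j such that |aᵢ - u·vᵢ| = |aⱼ - u·vⱼ| = ‖a - u·v‖_∞ and sign(vᵢ(aᵢ - u·vᵢ)) = -sign(vⱼ(aⱼ - u·vⱼ)). -/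
open Filter

/-!
Write `r = a - u • v`. Shifting `u` by `δ` turns each residual `r k` into `r k - δ * v k`; at an
extremal index this lowers `|r k|` for small `δ` of the sign of `v k * r k` and never lowers it
for `δ` of the opposite sign. So two extremal indices with opposite signs of `v k * r k` block
every shift, while if all extremal signs agree a small shift in that direction lowers all extremal
residuals and keeps the others below the maximum.
-/

open Topology

namespace Real

theorem sign_eq_neg_sign_of_mul_neg {x y : ℝ} (h : x * y < 0) : sign x = -sign y := by
  rcases mul_neg_iff.mp h with ⟨hx, hy⟩ | ⟨hx, hy⟩
  · rw [sign_of_pos hx, sign_of_neg hy, neg_neg]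
  · rw [sign_of_neg hx, sign_of_pos hy]

theorem mul_nonpos_of_sign_eq_neg_sign {x y : ℝ} (h : sign x = -sign y) : x * y ≤ 0 := by
  by_contra! hxy
  rcases mul_pos_iff.mp hxy with ⟨hx, hy⟩ | ⟨hx, hy⟩
  · rw [sign_of_pos hx, sign_of_pos hy] at h; norm_num at h
  · rw [sign_of_neg hx, sign_of_neg hy] at h; norm_num at h

end Real

theorem abs_le_abs_sub_mul {x c δ : ℝ} (h : δ * (c * x) ≤ 0) : |x| ≤ |x - δ * c| :=
  sq_le_sq.mp (by nlinarith [sq_nonneg (δ * c)])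

theorem eventually_abs_sub_mul_lt {x c : ℝ} (h : 0 < c * x) :
    ∀ᶠ δ in 𝓝[>] (0 : ℝ), |x - δ * c| < |x| := by
  have htend : Tendsto (fun δ : ℝ => δ * c ^ 2) (𝓝 0) (𝓝 0) :=
    (continuous_id.mul continuous_const).tendsto' 0 0 (by simp)
  have hsmall : ∀ᶠ δ in 𝓝[>] (0 : ℝ), δ * c ^ 2 < 2 * (c * x) :=
    (htend.eventually_lt_const (by linarith)).filter_mono nhdsWithin_le_nhds
  filter_upwards [hsmall, self_mem_nhdsWithin] with δ hδ (hpos : 0 < δ)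
  exact sq_lt_sq.mp (by nlinarith)

section SupNorm

variable {ι : Type*} [Fintype ι] {r c : ι → ℝ}

theorem norm_le_norm_sub_smul {i j : ι} (hi : |r i| = ‖r‖) (hj : |r j| = ‖r‖)
    (hij : (c i * r i) * (c j * r j) ≤ 0) (δ : ℝ) : ‖r‖ ≤ ‖r - δ • c‖ := by
  obtain ⟨k, hk, hδk⟩ : ∃ k, |r k| = ‖r‖ ∧ δ * (c k * r k) ≤ 0 := by
    by_cases hδi : δ * (c i * r i) ≤ 0
    · exact ⟨i, hi, hδi⟩
    · exact ⟨j, hj, by nlinarith [mul_nonneg (sq_nonneg δ) (neg_nonneg.mpr hij)]⟩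
  calc ‖r‖ = |r k| := hk.symm
    _ ≤ |r k - δ * c k| := abs_le_abs_sub_mul hδk
    _ ≤ ‖r - δ • c‖ := norm_le_pi_norm (r - δ • c) k

theorem exists_abs_eq_norm (hr : 0 < ‖r‖) : ∃ i, |r i| = ‖r‖ := by
  by_contra! h
  exact lt_irrefl _ ((pi_norm_lt_iff hr).2 fun k => (norm_le_pi_norm r k).lt_of_ne (h k))

theorem exists_norm_sub_smul_lt (hr : 0 < ‖r‖) (h : ∀ k, |r k| = ‖r‖ → 0 < c k * r k) :
    ∃ δ : ℝ, ‖r - δ • c‖ < ‖r‖ := by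
  suffices ∀ᶠ δ in 𝓝[>] (0 : ℝ), ∀ k, |r k - δ * c k| < ‖r‖ from
    this.exists.imp fun δ hδ => (pi_norm_lt_iff hr).2 hδ
  refine eventually_all.2 fun k => ?_
  rcases (norm_le_pi_norm r k).eq_or_lt with hk | hk
  · exact (eventually_abs_sub_mul_lt (h k hk)).mono fun δ hδ => hk ▸ hδ
  · refine (Tendsto.eventually_lt_const hk ?_).filter_mono nhdsWithin_le_nhds
    simpa using (continuous_const.sub (continuous_id.mul continuous_const)).abs.tendsto (0 : ℝ)
      (f := fun δ => |r k - δ * c k|)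

theorem exists_alternance_of_forall_norm_le (hc : ∀ k, c k ≠ 0) (hr : 0 < ‖r‖)
    (hmin : ∀ δ : ℝ, ‖r‖ ≤ ‖r - δ • c‖) :
    ∃ i j, |r i| = ‖r‖ ∧ |r j| = ‖r‖ ∧ (c i * r i) * (c j * r j) < 0 := by
  have hr_ne : ∀ k, |r k| = ‖r‖ → r k ≠ 0 := fun k hk => abs_pos.mp (hk ▸ hr)
  obtain ⟨i, hi⟩ := exists_abs_eq_norm hr
  by_contra! hsame
  obtain ⟨δ, hδ⟩ := exists_norm_sub_smul_lt (c := (c i * r i) • c) hr fun k hk => by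
    have hne : (c i * r i) * (c k * r k) ≠ 0 :=
      mul_ne_zero (mul_ne_zero (hc i) (hr_ne i hi)) (mul_ne_zero (hc k) (hr_ne k hk))
    simpa only [Pi.smul_apply, smul_eq_mul, mul_assoc] using (hsame i k hi hk).lt_of_ne' hne
  exact (hmin (δ * (c i * r i))).not_gt (by rwa [mul_smul])

end SupNorm

theorem stmt1 {n : ℕ} (hn : 2 ≤ n) (a v : Fin n → ℝ) (hv : Cheb v) (u : ℝ) :
    (∀ t : ℝ, ‖a - u • v‖ ≤ ‖a - t • v‖) ↔
      ∃ i j : Fin n, i ≠ j ∧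
        |a i - u * v i| = ‖a - u • v‖ ∧ |a j - u * v j| = ‖a - u • v‖ ∧
        Real.sign (v i * (a i - u * v i)) = -Real.sign (v j * (a j - u * v j)) := by
  have hshift : ∀ t : ℝ, a - t • v = (a - u • v) - (t - u) • v := fun t => by
    rw [sub_smul]; abel
  constructor
  · intro hmin
    rcases (norm_nonneg (a - u • v)).eq_or_lt with h0 | hpos
    · have hzero : ∀ k, a k - u * v k = 0 := fun k =>
        congrFun (norm_eq_zero.mp h0.symm) k
      refine ⟨⟨0, by omega⟩, ⟨1, by omega⟩, by simp [Fin.ext_iff], ?_, ?_, ?_⟩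
      · rw [hzero, ← h0, abs_zero]
      · rw [hzero, ← h0, abs_zero]
      · simp only [hzero, mul_zero, Real.sign_zero, neg_zero]
    · obtain ⟨i, j, hi, hj, hneg⟩ := exists_alternance_of_forall_norm_le hv hpos fun δ => by
        simpa only [hshift (u + δ), add_sub_cancel_left] using hmin (u + δ)
      refine ⟨i, j, ?_, hi, hj, Real.sign_eq_neg_sign_of_mul_neg hneg⟩
      rintro rfl
      exact (mul_self_nonneg _).not_gt hneg
  · rintro ⟨i, j, -, hi, hj, hsign⟩ t
    rw [hshift t]
    exact norm_le_norm_sub_smul (r := a - u • v) (c := v) hi hj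
      (Real.mul_nonpos_of_sign_eq_neg_sign hsign) _
end

section
/- Let a ∈ ℝⁿ (n ≥ 2) be alternance-free and v ∈ ℝⁿ Chebyshev. Then δ(a)/(2‖v‖_∞) ≤ |μ(a,v)| ≤ 2‖a‖_∞/‖v‖_∞, where δ(a) = ‖a‖_∞ - max_{j ≠ χ(a)} |aⱼ|. -/
open Filter

set_option maxHeartbeats 1000000 in
theorem stmt4 {n : ℕ} (hn : 2 ≤ n) (a v : Fin n → ℝ) (ha : AlternanceFree a) (hv : Cheb v)
    (i : Fin n) (hi : |a i| = ‖a‖) :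
    (‖a‖ - sSup {x : ℝ | ∃ j, j ≠ i ∧ x = |a j|}) / (2 * ‖v‖) ≤ |mu a v| ∧
      |mu a v| ≤ 2 * ‖a‖ / ‖v‖ := by
  classical
  haveI : Nontrivial (Fin n) := Fin.nontrivial_iff_two_le.mpr hn
  set N := ‖v‖ with hNdef
  have hvile : |v i| ≤ N := by simpa [Real.norm_eq_abs] using norm_le_pi_norm v i
  have hvi : 0 < |v i| := abs_pos.mpr (hv i)
  have hN : 0 < N := lt_of_lt_of_le hvi hvile
  set S : Set ℝ := {x : ℝ | ∃ j, j ≠ i ∧ x = |a j|} with hSdef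
  obtain ⟨j0, hj0⟩ := exists_ne i
  have hSne : S.Nonempty := ⟨|a j0|, j0, hj0, rfl⟩
  have hSfin : S.Finite := Set.Finite.subset (Set.finite_range fun j => |a j|)
    (by rintro x ⟨j, -, rfl⟩; exact ⟨j, rfl⟩)
  set M := sSup S with hMdef
  have hMmem : M ∈ S := hSne.csSup_mem hSfin
  have hMub : ∀ j, j ≠ i → |a j| ≤ M := fun j hj =>
    le_csSup hSfin.bddAbove ⟨j, hj, rfl⟩
  -- uniqueness of max index
  obtain ⟨i0, hi0, hu⟩ := ha
  have hii0 : i = i0 := hu i hi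
  have hMlt : M < ‖a‖ := by
    obtain ⟨j, hj, hMj⟩ := hMmem
    have h1 : |a j| ≤ ‖a‖ := by simpa [Real.norm_eq_abs] using norm_le_pi_norm a j
    have h2 : |a j| ≠ ‖a‖ := fun h => hj (by rw [hu j h, ← hii0])
    rw [hMj]; exact lt_of_le_of_ne h1 h2
  have hM0 : 0 ≤ M := by
    obtain ⟨j, -, hMj⟩ := hMmem; rw [hMj]; exact abs_nonneg _
  -- existence of a minimizer, hence the epsilon spec holds
  have hcont : Continuous fun u : ℝ => ‖a - u • v‖ :=
    (continuous_const.sub (continuous_id.smul continuous_const)).norm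
  have hlb : ∀ u : ℝ, |u| * N - ‖a‖ ≤ ‖a - u • v‖ := by
    intro u
    have h1 : ‖u • v‖ - ‖a‖ ≤ ‖u • v - a‖ := norm_sub_norm_le _ _
    rw [norm_sub_rev] at h1
    simpa [norm_smul, Real.norm_eq_abs] using h1
  have hcoer : Tendsto (fun u : ℝ => ‖a - u • v‖) (cocompact ℝ) atTop := by
    refine tendsto_atTop_mono hlb ?_
    have h1 : Tendsto (fun u : ℝ => |u|) (cocompact ℝ) atTop := by
      exact tendsto_norm_cocompact_atTop (E := ℝ)
    exact tendsto_atTop_add_const_right _ _ (h1.atTop_mul_const hN)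
  obtain ⟨t0, ht0⟩ := hcont.exists_forall_le hcoer
  have hmu : ∀ u : ℝ, ‖a - (mu a v) • v‖ ≤ ‖a - u • v‖ :=
    Classical.epsilon_spec (p := fun t : ℝ => ∀ u : ℝ, ‖a - t • v‖ ≤ ‖a - u • v‖) ⟨t0, ht0⟩
  set t := mu a v with htdef
  -- upper bound
  have htv : |t| * N ≤ 2 * ‖a‖ := by
    have h0 : ‖a - t • v‖ ≤ ‖a‖ := by simpa using hmu 0
    calc |t| * N = ‖t • v‖ := by rw [norm_smul, Real.norm_eq_abs]
      _ = ‖a - (a - t • v)‖ := by congr 1; abel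
      _ ≤ ‖a‖ + ‖a - t • v‖ := norm_sub_le _ _
      _ ≤ 2 * ‖a‖ := by linarith
  have upper : |t| ≤ 2 * ‖a‖ / N := (le_div_iff₀ hN).mpr htv
  refine ⟨?_, upper⟩
  -- lower bound, by contradiction
  by_contra hcon
  push_neg at hcon
  have h2 : |t| * (2 * N) < ‖a‖ - M := (lt_div_iff₀ (by positivity)).mp hcon
  set r : Fin n → ℝ := fun k => a k - t * v k with hrdef
  have hrk : ∀ k, (a - t • v) k = r k := fun k => by
    simp [hrdef, Pi.sub_apply, Pi.smul_apply, smul_eq_mul]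
  have hri : ‖a‖ - |t| * N ≤ |r i| := by
    have h3 : |a i| - |t * v i| ≤ |a i - t * v i| := abs_sub_abs_le_abs_sub _ _
    have h4 : |t * v i| ≤ |t| * N := by
      rw [abs_mul]; exact mul_le_mul_of_nonneg_left hvile (abs_nonneg t)
    rw [hi] at h3
    simp only [hrdef]
    linarith
  have hrj : ∀ j, j ≠ i → |r j| ≤ M + |t| * N := by
    intro j hj
    have h3 : |a j - t * v j| ≤ |a j| + |t * v j| := abs_sub _ _
    have h4 : |t * v j| ≤ |t| * N := by
      rw [abs_mul]
      exact mul_le_mul_of_nonneg_left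
        (by simpa [Real.norm_eq_abs] using norm_le_pi_norm v j) (abs_nonneg t)
    have h5 := hMub j hj
    simp only [hrdef]
    linarith
  set g : ℝ := ‖a‖ - M - 2 * (|t| * N) with hgdef
  have hg : 0 < g := by simp only [hgdef]; linarith
  have hripos : 0 < |r i| := by
    have : 0 ≤ |t| * N := by positivity
    linarith
  have hgap : ∀ j, j ≠ i → |r j| ≤ |r i| - g := by
    intro j hj
    have := hrj j hj
    simp only [hgdef]; linarith
  -- perturbation
  set θ : ℝ := min 1 (g * |v i| / (2 * |r i| * N)) with hθdef
  have hθpos : 0 < θ := lt_min one_pos (by positivity)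
  have hθ1 : θ ≤ 1 := min_le_left _ _
  have hθ2 : θ ≤ g * |v i| / (2 * |r i| * N) := min_le_right _ _
  set η : ℝ := θ * r i / v i with hηdef
  have hηvi : η * v i = θ * r i := by
    rw [hηdef, div_mul_cancel₀ _ (hv i)]
  have hηabs : |η| * N ≤ g / 2 := by
    have habs : |η| = θ * |r i| / |v i| := by
      rw [hηdef, abs_div, abs_mul, abs_of_pos hθpos]
    rw [habs]
    rw [div_mul_eq_mul_div, div_le_div_iff₀ hvi two_pos]
    have h5 : θ * (2 * |r i| * N) ≤ g * |v i| :=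
      (le_div_iff₀ (by positivity)).mp hθ2 |>.trans_eq rfl
    nlinarith [hripos, hN, hvi]
  set c : ℝ := min (θ * |r i|) (g / 2) with hcdef
  have hc : 0 < c := lt_min (by positivity) (by positivity)
  have hcle : c ≤ |r i| := le_trans (min_le_left _ _) (by nlinarith)
  have hfin : ‖a - (t + η) • v‖ ≤ |r i| - c := by
    rw [pi_norm_le_iff_of_nonneg (by linarith)]
    intro k
    have hk : (a - (t + η) • v) k = r k - η * v k := by
      simp [hrdef, Pi.sub_apply, Pi.smul_apply, smul_eq_mul]; ring
    rw [Real.norm_eq_abs, hk]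
    rcases eq_or_ne k i with rfl | hki
    · rw [hηvi]
      have : r k - θ * r k = (1 - θ) * r k := by ring
      rw [this, abs_mul, abs_of_nonneg (by linarith : (0:ℝ) ≤ 1 - θ)]
      have hcm : c ≤ θ * |r k| := min_le_left _ _
      nlinarith [abs_nonneg (r k)]
    · have h3 : |r k - η * v k| ≤ |r k| + |η * v k| := abs_sub _ _
      have h4 : |η * v k| ≤ |η| * N := by
        rw [abs_mul]
        exact mul_le_mul_of_nonneg_left
          (by simpa [Real.norm_eq_abs] using norm_le_pi_norm v k) (abs_nonneg η)
      have h5 := hgap k hki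
      have h6 : c ≤ g / 2 := min_le_right _ _
      linarith
  have hcontr : ‖a - t • v‖ ≤ |r i| - c := le_trans (hmu (t + η)) hfin
  have hge : |r i| ≤ ‖a - t • v‖ := by
    have := norm_le_pi_norm (a - t • v) i
    rwa [Real.norm_eq_abs, hrk i] at this
  linarith
end

section
/- The set PC_{m,n} of m×n real matrices (m,n ≥ 2) that preserve Chebyshev systems is open and dense in ℝ^{m×n}, and its complement has Lebesgue measure zero. -/
open Filter

lemma abs_le_norm {n : ℕ} (a : Fin n → ℝ) (i : Fin n) : |a i| ≤ ‖a‖ := by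
  simpa [Real.norm_eq_abs] using norm_le_pi_norm a i

lemma exists_abs_eq_norm_s6 {n : ℕ} [NeZero n] (a : Fin n → ℝ) : ∃ i, |a i| = ‖a‖ := by
  obtain ⟨i, -, hi⟩ := Finset.exists_mem_eq_sup Finset.univ Finset.univ_nonempty (fun i => ‖a i‖₊)
  exact ⟨i, by rw [Pi.norm_def, hi]; simp [Real.norm_eq_abs]⟩

lemma exists_min {n : ℕ} (a v : Fin n → ℝ) (hv : v ≠ 0) :
    ∃ t : ℝ, ∀ u : ℝ, ‖a - t • v‖ ≤ ‖a - u • v‖ := by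
  have hvp : (0:ℝ) < ‖v‖ := norm_pos_iff.2 hv
  set R : ℝ := (2 * ‖a‖ + 1) / ‖v‖ with hR
  have hRpos : 0 < R := div_pos (by positivity) hvp
  have hcont : Continuous fun t : ℝ => ‖a - t • v‖ := by continuity
  obtain ⟨t, htK, ht⟩ := (isCompact_Icc (a := -R) (b := R)).exists_isMinOn
    (Set.nonempty_Icc.2 (by linarith)) hcont.continuousOn
  refine ⟨t, fun u => ?_⟩
  by_cases hu : u ∈ Set.Icc (-R) R
  · exact ht hu
  · have h0 : (0:ℝ) ∈ Set.Icc (-R) R := Set.mem_Icc.2 ⟨by linarith, le_of_lt hRpos⟩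
    have h1 : ‖a - t • v‖ ≤ ‖a‖ := by simpa using ht h0
    have hu' : R < |u| := by
      rw [Set.mem_Icc, not_and_or, not_le, not_le] at hu
      rcases hu with h | h
      · rw [abs_of_neg (by linarith)]; linarith
      · rw [abs_of_pos (by linarith)]; exact h
    have : ‖a‖ < ‖a - u • v‖ := by
      have h2 : ‖u • v‖ - ‖a‖ ≤ ‖a - u • v‖ := by
        have := norm_sub_norm_le (a - u • v) a
        have h3 := norm_le_norm_add_norm_sub' (u • v) a
        calc ‖u • v‖ - ‖a‖ ≤ ‖u • v - a‖ := by
              have := norm_sub_norm_le (u • v) a; linarith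
          _ = ‖a - u • v‖ := by rw [norm_sub_rev]
      have h4 : ‖u • v‖ = |u| * ‖v‖ := by rw [norm_smul, Real.norm_eq_abs]
      have h5 : (2*‖a‖+1) < |u| * ‖v‖ := by
        have := (div_lt_iff₀ hvp).1 hu'
        linarith
      linarith
    linarith

lemma mu_isMin {n : ℕ} (a v : Fin n → ℝ) (hv : v ≠ 0) :
    ∀ u : ℝ, ‖a - mu a v • v‖ ≤ ‖a - u • v‖ :=
  Classical.epsilon_spec (exists_min a v hv)

/-- If the row is not alternance-free, there is a Chebyshev `v` with `mu a v = 0`. -/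
lemma exists_bad_v {n : ℕ} (hn : 2 ≤ n) (a : Fin n → ℝ) (ha : ¬ ∃! i, |a i| = ‖a‖) :
    ∃ v : Fin n → ℝ, (∀ i, v i ≠ 0) ∧ mu a v = 0 := by
  haveI : NeZero n := ⟨by omega⟩
  -- get two distinct maximizers
  obtain ⟨k, hk⟩ := exists_abs_eq_norm_s6 a
  have : ∃ l, |a l| = ‖a‖ ∧ l ≠ k := by
    by_contra h
    push_neg at h
    exact ha ⟨k, hk, fun l hl => by by_contra hne; exact hne (h l hl)⟩
  obtain ⟨l, hl, hlk⟩ := this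
  -- construct v
  by_cases h0 : ‖a‖ = 0
  · have haz : a = 0 := norm_eq_zero.1 h0
    set v : Fin n → ℝ := fun _ => 1 with hvdef
    refine ⟨v, fun i => one_ne_zero, ?_⟩
    have hkey : ∀ t : ℝ, t ≠ 0 → ‖a‖ < ‖a - t • v‖ := by
      intro t ht
      have h1 : |(a - t • v) k| = |t| := by simp [haz, hvdef]
      have h2 := abs_le_norm (a - t • v) k
      rw [h1] at h2
      have : (0:ℝ) < |t| := abs_pos.2 ht
      linarith
    have hmin := mu_isMin a v (by intro h; have := congrFun h k; simp [v] at this)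
    by_contra hmu
    have := hmin 0
    simp only [zero_smul, sub_zero] at this
    exact absurd this (not_le.2 (hkey _ hmu))
  · have hMpos : 0 < ‖a‖ := lt_of_le_of_ne (norm_nonneg a) (Ne.symm h0)
    set v : Fin n → ℝ := fun i => if i = k then a k else if i = l then -(a l) else 1 with hv
    have hak : a k ≠ 0 := fun h => by rw [h] at hk; simp at hk; exact h0 hk.symm
    have hal : a l ≠ 0 := fun h => by rw [h] at hl; simp at hl; exact h0 hl.symm
    have hvC : ∀ i, v i ≠ 0 := by
      intro i; simp only [hv]
      split
      · exact hak
      · split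
        · exact neg_ne_zero.2 hal
        · exact one_ne_zero
    have hkey : ∀ t : ℝ, t ≠ 0 → ‖a‖ < ‖a - t • v‖ := by
      intro t ht
      rcases lt_or_gt_of_ne ht with htneg | htpos
      · -- t < 0 : use index k
        have hvk : v k = a k := by simp [hv]
        have : |(a - t • v) k| = (1 - t) * |a k| := by
          simp only [Pi.sub_apply, Pi.smul_apply, smul_eq_mul, hvk]
          rw [show a k - t * a k = (1 - t) * a k by ring, abs_mul,
            abs_of_pos (by linarith)]
        have h2 := abs_le_norm (a - t • v) k
        rw [this] at h2
        have : ‖a‖ < (1 - t) * |a k| := by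
          rw [hk]; nlinarith
        linarith
      · -- t > 0 : use index l
        have hvl : v l = -(a l) := by simp [hv, hlk]
        have : |(a - t • v) l| = (1 + t) * |a l| := by
          simp only [Pi.sub_apply, Pi.smul_apply, smul_eq_mul, hvl]
          rw [show a l - t * (-(a l)) = (1 + t) * a l by ring, abs_mul,
            abs_of_pos (by linarith)]
        have h2 := abs_le_norm (a - t • v) l
        rw [this] at h2
        have : ‖a‖ < (1 + t) * |a l| := by
          rw [hl]; nlinarith
        linarith
    refine ⟨v, hvC, ?_⟩
    have hvne : v ≠ 0 := fun h => hvC k (by rw [h]; rfl)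
    have hmin := mu_isMin a v hvne
    by_contra hmu
    have := hmin 0
    simp only [zero_smul, sub_zero] at this
    exact absurd this (not_le.2 (hkey _ hmu))
lemma mu_ne_zero {n : ℕ} (hn : 2 ≤ n) (a v : Fin n → ℝ) (hAF : ∃! i, |a i| = ‖a‖)
    (hv : ∀ i, v i ≠ 0) : mu a v ≠ 0 := by
  haveI : NeZero n := ⟨by omega⟩
  obtain ⟨i₀, hi₀, huniq⟩ := hAF
  haveI : Nontrivial (Fin n) := Fin.nontrivial_iff_two_le.2 hn
  have hMpos : 0 < ‖a‖ := by
    rcases (norm_nonneg a).lt_or_eq with h | h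
    · exact h
    · exfalso
      obtain ⟨j, hj⟩ := exists_ne i₀
      have haz : a = 0 := norm_eq_zero.1 h.symm
      have h1 : |a j| = ‖a‖ := by rw [haz]; simp
      exact hj (huniq j h1)
  have hstrict : ∀ k, k ≠ i₀ → |a k| < ‖a‖ := by
    intro k hk
    rcases (abs_le_norm a k).lt_or_eq with h | h
    · exact h
    · exact absurd (huniq k h) hk
  -- second max
  have hne : (Finset.univ.erase i₀).Nonempty := by
    obtain ⟨j, hj⟩ := exists_ne i₀
    exact ⟨j, Finset.mem_erase.2 ⟨hj, Finset.mem_univ j⟩⟩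
  set M' : ℝ := (Finset.univ.erase i₀).sup' hne (fun k => |a k|) with hM'
  have hM'lt : M' < ‖a‖ := by
    rw [hM', Finset.sup'_lt_iff]
    intro k hk
    exact hstrict k (Finset.mem_erase.1 hk).1
  have hM'ge : ∀ k, k ≠ i₀ → |a k| ≤ M' := by
    intro k hk
    rw [hM']
    exact Finset.le_sup' (fun k => |a k|) (Finset.mem_erase.2 ⟨hk, Finset.mem_univ k⟩)
  have hM'0 : 0 ≤ M' := by
    obtain ⟨j, hj⟩ := hne
    rw [hM']
    exact le_trans (abs_nonneg (a j)) (Finset.le_sup' (fun k => |a k|) hj)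
  set B : ℝ := (|a i₀| / |v i₀|) * ‖v‖ with hB
  have hB0 : 0 ≤ B := by positivity
  set ε : ℝ := min (1/2) ((‖a‖ - M') / (2 * (1 + B))) with hε
  have hεpos : 0 < ε := lt_min (by norm_num) (div_pos (by linarith) (by linarith))
  have hεle : ε ≤ 1/2 := min_le_left _ _
  have hεle2 : ε * (1 + B) ≤ (‖a‖ - M') / 2 := by
    have h1 : ε ≤ (‖a‖ - M') / (2 * (1 + B)) := min_le_right _ _
    have h2 : (0:ℝ) < 1 + B := by linarith
    calc ε * (1 + B) ≤ (‖a‖ - M') / (2 * (1 + B)) * (1 + B) := by nlinarith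
      _ = (‖a‖ - M') / 2 := by field_simp
  set t : ℝ := ε * (a i₀ / v i₀) with ht
  have hkey : ‖a - t • v‖ < ‖a‖ := by
    obtain ⟨j, hj⟩ := exists_abs_eq_norm_s6 (a - t • v)
    rw [← hj]
    by_cases hji : j = i₀
    · subst hji
      have : (a - t • v) j = (1 - ε) * a j := by
        simp only [Pi.sub_apply, Pi.smul_apply, smul_eq_mul, ht]
        field_simp [hv j]
      rw [this, abs_mul, abs_of_pos (by linarith), hi₀]
      nlinarith
    · have h1 : |(a - t • v) j| ≤ |a j| + |t| * |v j| := by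
        simp only [Pi.sub_apply, Pi.smul_apply, smul_eq_mul]
        calc |a j - t * v j| ≤ |a j| + |t * v j| := abs_sub _ _
          _ = |a j| + |t| * |v j| := by rw [abs_mul]
      have h2 : |t| = ε * (|a i₀| / |v i₀|) := by
        rw [ht, abs_mul, abs_of_pos hεpos, abs_div]
      have h3 : |v j| ≤ ‖v‖ := abs_le_norm v j
      have h4 : |t| * |v j| ≤ ε * B := by
        rw [h2, hB]
        have : (0:ℝ) ≤ ε * (|a i₀| / |v i₀|) := by positivity
        calc ε * (|a i₀| / |v i₀|) * |v j| ≤ ε * (|a i₀| / |v i₀|) * ‖v‖ := by nlinarith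
          _ = ε * ((|a i₀| / |v i₀|) * ‖v‖) := by ring
      have h5 : |a j| ≤ M' := hM'ge j hji
      have h6 : ε * B ≤ ε * (1 + B) := by nlinarith
      linarith
  intro hmu
  have hvne : v ≠ 0 := fun h => hv i₀ (by rw [h]; rfl)
  have := mu_isMin a v hvne t
  rw [hmu, zero_smul, sub_zero] at this
  linarith
lemma preservesCheb_iff {m n : ℕ} (hm : 2 ≤ m) (hn : 2 ≤ n) (A : Fin m → Fin n → ℝ) :
    PreservesCheb A ↔ (∀ i, AlternanceFree (A i)) ∧ (∀ j, AlternanceFree (fun i => A i j)) := by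
  constructor
  · rintro ⟨h1, h2⟩
    constructor
    · intro i
      by_contra hAF
      obtain ⟨v, hvC, hmu⟩ := exists_bad_v hn (A i) hAF
      exact h1 v hvC i hmu
    · intro j
      by_contra hAF
      obtain ⟨u, huC, hmu⟩ := exists_bad_v hm (fun i => A i j) hAF
      exact h2 u huC j hmu
  · rintro ⟨h1, h2⟩
    exact ⟨fun v hv i => mu_ne_zero hn (A i) v (h1 i) hv,
           fun u hu j => mu_ne_zero hm (fun i => A i j) u (h2 j) hu⟩

lemma AF_iff {k : ℕ} [NeZero k] (a : Fin k → ℝ) :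
    AlternanceFree a ↔ ∃ i, ∀ j, j ≠ i → |a j| < |a i| := by
  constructor
  · rintro ⟨i, hi, huniq⟩
    refine ⟨i, fun j hj => ?_⟩
    rcases (abs_le_norm a j).lt_or_eq with h | h
    · rw [hi]; exact h
    · exact absurd (huniq j h) hj
  · rintro ⟨i, hi⟩
    have hnorm : |a i| = ‖a‖ := by
      obtain ⟨j, hj⟩ := exists_abs_eq_norm_s6 a
      rcases eq_or_ne j i with rfl | hji
      · exact hj
      · have h1 := hi j hji
        have h2 := abs_le_norm a i
        linarith
    refine ⟨i, hnorm, fun y hy => ?_⟩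
    by_contra h
    have := hi y h
    rw [hy, hnorm] at this
    exact lt_irrefl _ this

lemma isOpen_AF {k : ℕ} [NeZero k] : IsOpen {a : Fin k → ℝ | AlternanceFree a} := by
  have hset : {a : Fin k → ℝ | AlternanceFree a} =
      ⋃ i, ⋂ j, ⋂ (_ : j ≠ i), {a : Fin k → ℝ | |a j| < |a i|} := by
    ext a
    simp only [Set.mem_iUnion, Set.mem_iInter, Set.mem_setOf_eq, AF_iff]
  rw [hset]
  refine isOpen_iUnion fun i =>
    isOpen_iInter_of_finite fun j => isOpen_iInter_of_finite fun hj => ?_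
  exact isOpen_lt ((continuous_apply j).abs) ((continuous_apply i).abs)

lemma not_AF_pair {k : ℕ} [NeZero k] (a : Fin k → ℝ) (h : ¬ AlternanceFree a) :
    ∃ p q, p ≠ q ∧ |a p| = |a q| := by
  obtain ⟨p, hp⟩ := exists_abs_eq_norm_s6 a
  have : ∃ q, |a q| = ‖a‖ ∧ q ≠ p := by
    by_contra hq
    push_neg at hq
    exact h ⟨p, hp, fun y hy => hq y hy⟩
  obtain ⟨q, hq1, hq2⟩ := this
  exact ⟨q, p, hq2, hq1.trans hp.symm⟩

noncomputable def entryLin {m n : ℕ} (i : Fin m) (j : Fin n) : (Fin m → Fin n → ℝ) →ₗ[ℝ] ℝ where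
  toFun A := A i j
  map_add' _ _ := rfl
  map_smul' _ _ := rfl

lemma null_linear {m n : ℕ} (f : (Fin m → Fin n → ℝ) →ₗ[ℝ] ℝ) (hf : f ≠ 0) :
    MeasureTheory.volume {A : Fin m → Fin n → ℝ | f A = 0} = 0 := by
  have hker : {A : Fin m → Fin n → ℝ | f A = 0} = (LinearMap.ker f : Set _) := rfl
  rw [hker]
  exact MeasureTheory.Measure.addHaar_submodule _ _
    (fun h => hf (LinearMap.ker_eq_top.1 h))

lemma null_abs_eq {m n : ℕ} (i i' : Fin m) (j j' : Fin n) (h : (i, j) ≠ (i', j')) :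
    MeasureTheory.volume {A : Fin m → Fin n → ℝ | |A i j| = |A i' j'|} = 0 := by
  have hsub : {A : Fin m → Fin n → ℝ | |A i j| = |A i' j'|} ⊆
      {A | (entryLin i j - entryLin i' j') A = 0} ∪
      {A | (entryLin i j + entryLin i' j') A = 0} := by
    intro A hA
    rcases abs_eq_abs.1 hA with heq | heq
    · left; simp [entryLin, heq]
    · right; simp [entryLin, heq]
  have hA0 : ∀ (c : ℝ), (fun (p : Fin m) (q : Fin n) =>
      if p = i ∧ q = j then (1:ℝ) else 0) i' j' = 0 := by
    intro _
    simp only [ite_eq_right_iff, and_imp]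
    intro hi hj
    exact absurd (Prod.ext hi hj) h.symm
  refine MeasureTheory.measure_mono_null hsub (MeasureTheory.measure_union_null ?_ ?_)
  · refine null_linear _ fun hf => ?_
    have := LinearMap.congr_fun hf (fun p q => if p = i ∧ q = j then (1:ℝ) else 0)
    simp [entryLin, hA0 1] at this
  · refine null_linear _ fun hf => ?_
    have := LinearMap.congr_fun hf (fun p q => if p = i ∧ q = j then (1:ℝ) else 0)
    simp [entryLin, hA0 1] at this

theorem stmt6 {m n : ℕ} (hm : 2 ≤ m) (hn : 2 ≤ n) :
    IsOpen {A : Fin m → Fin n → ℝ | PreservesCheb A} ∧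
    Dense {A : Fin m → Fin n → ℝ | PreservesCheb A} ∧
    MeasureTheory.volume {A : Fin m → Fin n → ℝ | PreservesCheb A}ᶜ = 0 := by
  haveI : NeZero m := ⟨by omega⟩
  haveI : NeZero n := ⟨by omega⟩
  have hset : {A : Fin m → Fin n → ℝ | PreservesCheb A} =
      (⋂ i, (fun A : Fin m → Fin n → ℝ => A i) ⁻¹' {a | AlternanceFree a}) ∩
      (⋂ j, (fun (A : Fin m → Fin n → ℝ) (i : Fin m) => A i j) ⁻¹' {a | AlternanceFree a}) := by
    ext A
    simp only [Set.mem_setOf_eq, Set.mem_inter_iff, Set.mem_iInter, Set.mem_preimage,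
      preservesCheb_iff hm hn A]
  have hopen : IsOpen {A : Fin m → Fin n → ℝ | PreservesCheb A} := by
    rw [hset]
    refine IsOpen.inter (isOpen_iInter_of_finite fun i => ?_)
      (isOpen_iInter_of_finite fun j => ?_)
    · exact isOpen_AF.preimage (continuous_apply i)
    · exact isOpen_AF.preimage
        (continuous_pi fun i => (continuous_apply j).comp (continuous_apply i))
  have hnull : MeasureTheory.volume {A : Fin m → Fin n → ℝ | PreservesCheb A}ᶜ = 0 := by
    have hsub : {A : Fin m → Fin n → ℝ | PreservesCheb A}ᶜ ⊆
        (⋃ i : Fin m, ⋃ k : Fin n, ⋃ l : Fin n, ⋃ (_ : k ≠ l),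
          {A : Fin m → Fin n → ℝ | |A i k| = |A i l|}) ∪
        (⋃ j : Fin n, ⋃ k : Fin m, ⋃ l : Fin m, ⋃ (_ : k ≠ l),
          {A : Fin m → Fin n → ℝ | |A k j| = |A l j|}) := by
      intro A hA
      simp only [Set.mem_compl_iff, Set.mem_setOf_eq, preservesCheb_iff hm hn A,
        not_and_or, not_forall] at hA
      rcases hA with ⟨i, hi⟩ | ⟨j, hj⟩
      · obtain ⟨p, q, hpq, habs⟩ := not_AF_pair _ hi
        exact Or.inl (Set.mem_iUnion.2 ⟨i, Set.mem_iUnion.2 ⟨p, Set.mem_iUnion.2 ⟨q,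
          Set.mem_iUnion.2 ⟨hpq, habs⟩⟩⟩⟩)
      · obtain ⟨p, q, hpq, habs⟩ := not_AF_pair _ hj
        exact Or.inr (Set.mem_iUnion.2 ⟨j, Set.mem_iUnion.2 ⟨p, Set.mem_iUnion.2 ⟨q,
          Set.mem_iUnion.2 ⟨hpq, habs⟩⟩⟩⟩)
    refine MeasureTheory.measure_mono_null hsub (MeasureTheory.measure_union_null ?_ ?_)
    · refine MeasureTheory.measure_iUnion_null fun i => MeasureTheory.measure_iUnion_null fun k =>
        MeasureTheory.measure_iUnion_null fun l => MeasureTheory.measure_iUnion_null fun hkl => ?_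
      exact null_abs_eq i i k l (fun h => hkl (Prod.ext_iff.1 h).2)
    · refine MeasureTheory.measure_iUnion_null fun j => MeasureTheory.measure_iUnion_null fun k =>
        MeasureTheory.measure_iUnion_null fun l => MeasureTheory.measure_iUnion_null fun hkl => ?_
      exact null_abs_eq k l j j (fun h => hkl (Prod.ext_iff.1 h).1)
  have hdense : Dense {A : Fin m → Fin n → ℝ | PreservesCheb A} := by
    rw [dense_iff_inter_open]
    intro U hU hUne
    by_contra h
    have hUsub : U ⊆ {A : Fin m → Fin n → ℝ | PreservesCheb A}ᶜ := by
      intro x hx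
      intro hxS
      exact h ⟨x, hx, hxS⟩
    have := MeasureTheory.measure_mono_null hUsub hnull
    exact (hU.measure_pos MeasureTheory.volume hUne).ne' this
  exact ⟨hopen, hdense, hnull⟩
end

section
/- Let A ∈ ℝ^{m×n} preserve Chebyshev systems (m,n ≥ 2). If v₁, v₂ ∈ ℝⁿ are Chebyshev vectors with sign(v₁) = sign(v₂) componentwise, then sign(φ(A, v₁)) = sign(φ(A, v₂)) componentwise. -/
open Filter

section AuxAM

variable {n : ℕ}

noncomputable def Pf (hne : (Finset.univ : Finset (Fin n)).Nonempty) (a s v : Fin n → ℝ)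
    (u : ℝ) : ℝ :=
  Finset.univ.sup' hne fun j => s j * (u * v j - a j)

noncomputable def Qf (hne : (Finset.univ : Finset (Fin n)).Nonempty) (a s v : Fin n → ℝ)
    (u : ℝ) : ℝ :=
  Finset.univ.sup' hne fun j => s j * (a j - u * v j)

noncomputable def Gf (hne : (Finset.univ : Finset (Fin n)).Nonempty) (a s v : Fin n → ℝ)
    (u : ℝ) : ℝ :=
  Pf hne a s v u - Qf hne a s v u

variable (hne : (Finset.univ : Finset (Fin n)).Nonempty) (a s v : Fin n → ℝ)

noncomputable def cmin (hne : (Finset.univ : Finset (Fin n)).Nonempty) (v : Fin n → ℝ) : ℝ :=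
  Finset.univ.inf' hne fun j => |v j|

lemma cmin_pos (hch : ∀ j, v j ≠ 0) : 0 < cmin hne v := by
  rw [cmin, Finset.lt_inf'_iff]
  exact fun j _ => abs_pos.mpr (hch j)

lemma cmin_le (j : Fin n) : cmin hne v ≤ |v j| :=
  Finset.inf'_le _ (Finset.mem_univ j)

lemma Pf_grow (hsv : ∀ j, s j * v j = |v j|) {u u' : ℝ} (h : u ≤ u') :
    Pf hne a s v u + (u' - u) * cmin hne v ≤ Pf hne a s v u' := by
  have key : Pf hne a s v u ≤ Pf hne a s v u' - (u' - u) * cmin hne v := by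
    apply Finset.sup'_le
    intro j _
    have h1 : cmin hne v ≤ |v j| := cmin_le hne v j
    have h2 : s j * (u * v j - a j) + (u' - u) * |v j| = s j * (u' * v j - a j) := by
      rw [← hsv j]; ring
    have h3 := Finset.le_sup' (fun j => s j * (u' * v j - a j)) (Finset.mem_univ j)
    have h4 : (u' - u) * cmin hne v ≤ (u' - u) * |v j| :=
      mul_le_mul_of_nonneg_left h1 (by linarith)
    rw [Pf]
    linarith
  linarith

lemma Qf_grow (hsv : ∀ j, s j * v j = |v j|) {u u' : ℝ} (h : u ≤ u') :
    Qf hne a s v u' + (u' - u) * cmin hne v ≤ Qf hne a s v u := by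
  have key : Qf hne a s v u' ≤ Qf hne a s v u - (u' - u) * cmin hne v := by
    apply Finset.sup'_le
    intro j _
    have h1 : cmin hne v ≤ |v j| := cmin_le hne v j
    have h2 : s j * (a j - u' * v j) + (u' - u) * |v j| = s j * (a j - u * v j) := by
      rw [← hsv j]; ring
    have h3 := Finset.le_sup' (fun j => s j * (a j - u * v j)) (Finset.mem_univ j)
    have h4 : (u' - u) * cmin hne v ≤ (u' - u) * |v j| :=
      mul_le_mul_of_nonneg_left h1 (by linarith)
    rw [Qf]
    linarith
  linarith

lemma Gf_grow (hsv : ∀ j, s j * v j = |v j|) {u u' : ℝ} (h : u ≤ u') :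
    Gf hne a s v u + 2 * (u' - u) * cmin hne v ≤ Gf hne a s v u' := by
  have h1 := Pf_grow hne a s v hsv h
  have h2 := Qf_grow hne a s v hsv h
  rw [Gf, Gf]; linarith

lemma Gf_mono (hsv : ∀ j, s j * v j = |v j|) (hch : ∀ j, v j ≠ 0) {u u' : ℝ} (h : u ≤ u') :
    Gf hne a s v u ≤ Gf hne a s v u' := by
  have h1 := Gf_grow hne a s v hsv h
  have h2 := cmin_pos hne v hch
  nlinarith

lemma Gf_strict (hsv : ∀ j, s j * v j = |v j|) (hch : ∀ j, v j ≠ 0) {u u' : ℝ} (h : u < u') :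
    Gf hne a s v u < Gf hne a s v u' := by
  have h1 := Gf_grow hne a s v hsv h.le
  have h2 := cmin_pos hne v hch
  nlinarith

lemma Gf_cont : Continuous (Gf hne a s v) := by
  apply Continuous.sub
  · exact Continuous.finset_sup'_apply hne fun j _ => by fun_prop
  · exact Continuous.finset_sup'_apply hne fun j _ => by fun_prop

lemma Gf_exists_zero (hsv : ∀ j, s j * v j = |v j|) (hch : ∀ j, v j ≠ 0) :
    ∃ u : ℝ, Gf hne a s v u = 0 := by
  have hc := cmin_pos hne v hch
  set c := cmin hne v
  set b : ℝ := (|Gf hne a s v 0| + 1) / (2 * c) with hb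
  have hbpos : 0 < b := div_pos (by positivity) (by linarith)
  have hbc : 2 * b * c = |Gf hne a s v 0| + 1 := by
    rw [hb]; field_simp
  have hpos : 0 < Gf hne a s v b := by
    have := Gf_grow hne a s v hsv (le_of_lt (show (0:ℝ) < b from hbpos))
    have := abs_nonneg (Gf hne a s v 0)
    have h0 : -|Gf hne a s v 0| ≤ Gf hne a s v 0 := neg_abs_le _
    nlinarith
  have hneg : Gf hne a s v (-b) < 0 := by
    have := Gf_grow hne a s v hsv (show (-b:ℝ) ≤ 0 by linarith)
    have h0 : Gf hne a s v 0 ≤ |Gf hne a s v 0| := le_abs_self _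
    nlinarith
  have hsub := intermediate_value_Icc (show (-b:ℝ) ≤ b by linarith)
    ((Gf_cont hne a s v).continuousOn)
  have h0mem : (0:ℝ) ∈ Set.Icc (Gf hne a s v (-b)) (Gf hne a s v b) :=
    ⟨hneg.le, hpos.le⟩
  obtain ⟨u, -, hu⟩ := hsub h0mem
  exact ⟨u, hu⟩

lemma norm_eq_max (hs1 : ∀ j, s j = 1 ∨ s j = -1) (u : ℝ) :
    ‖a - u • v‖ = max (Pf hne a s v u) (Qf hne a s v u) := by
  have j₀ : Fin n := hne.choose
  have hPQ : 0 ≤ Pf hne a s v u + Qf hne a s v u := by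
    have h1 := Finset.le_sup' (fun j => s j * (u * v j - a j)) (Finset.mem_univ j₀)
    have h2 := Finset.le_sup' (fun j => s j * (a j - u * v j)) (Finset.mem_univ j₀)
    rw [Pf, Qf]; nlinarith [h1, h2]
  have hmax : 0 ≤ max (Pf hne a s v u) (Qf hne a s v u) := by
    rcases le_total (Pf hne a s v u) (Qf hne a s v u) with h | h
    · rw [max_eq_right h]; linarith
    · rw [max_eq_left h]; linarith
  apply le_antisymm
  · rw [pi_norm_le_iff_of_nonneg hmax]
    intro j
    rw [Pi.sub_apply, Pi.smul_apply, smul_eq_mul, Real.norm_eq_abs]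
    have h1 : s j * (u * v j - a j) ≤ Pf hne a s v u := by
      rw [Pf]; exact Finset.le_sup' (fun j => s j * (u * v j - a j)) (Finset.mem_univ j)
    have h2 : s j * (a j - u * v j) ≤ Qf hne a s v u := by
      rw [Qf]; exact Finset.le_sup' (fun j => s j * (a j - u * v j)) (Finset.mem_univ j)
    have hP := le_max_left (Pf hne a s v u) (Qf hne a s v u)
    have hQ := le_max_right (Pf hne a s v u) (Qf hne a s v u)
    rcases hs1 j with h | h <;> rw [h] at h1 h2 <;> rw [abs_le] <;> constructor <;> linarith
  · apply max_le
    · apply Finset.sup'_le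
      intro j _
      have h1 : |a j - u * v j| ≤ ‖a - u • v‖ := by
        have := norm_le_pi_norm (a - u • v) j
        simpa [Real.norm_eq_abs] using this
      have h2 : s j * (u * v j - a j) ≤ |a j - u * v j| := by
        rcases hs1 j with h | h <;> rw [h] <;>
          linarith [le_abs_self (a j - u * v j), neg_le_abs (a j - u * v j)]
      linarith
    · apply Finset.sup'_le
      intro j _
      have h1 : |a j - u * v j| ≤ ‖a - u • v‖ := by
        have := norm_le_pi_norm (a - u • v) j
        simpa [Real.norm_eq_abs] using this
      have h2 : s j * (a j - u * v j) ≤ |a j - u * v j| := by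
        rcases hs1 j with h | h <;> rw [h] <;>
          linarith [le_abs_self (a j - u * v j), neg_le_abs (a j - u * v j)]
      linarith

end AuxAM

section MuChar

variable {n : ℕ} (hne : (Finset.univ : Finset (Fin n)).Nonempty) (a s v : Fin n → ℝ)


lemma mu_Gf_zero (hs1 : ∀ j, s j = 1 ∨ s j = -1) (hsv : ∀ j, s j * v j = |v j|)
    (hch : ∀ j, v j ≠ 0) : Gf hne a s v (mu a v) = 0 := by
  obtain ⟨t, ht⟩ := Gf_exists_zero hne a s v hsv hch
  have hPQ : Pf hne a s v t = Qf hne a s v t := by rw [Gf] at ht; linarith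
  have hc := cmin_pos hne v hch
  have hstrict : ∀ u, u ≠ t → ‖a - t • v‖ < ‖a - u • v‖ := by
    intro u hu
    rw [norm_eq_max hne a s v hs1, norm_eq_max hne a s v hs1]
    rcases lt_or_gt_of_ne hu with h | h
    · have h1 := Qf_grow hne a s v hsv h.le
      have h2 := le_max_right (Pf hne a s v u) (Qf hne a s v u)
      have h3 : max (Pf hne a s v t) (Qf hne a s v t) = Qf hne a s v t := by
        rw [hPQ, max_self]
      rw [h3]; nlinarith
    · have h1 := Pf_grow hne a s v hsv h.le
      have h2 := le_max_left (Pf hne a s v u) (Qf hne a s v u)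
      have h3 : max (Pf hne a s v t) (Qf hne a s v t) = Pf hne a s v t := by
        rw [hPQ, max_self]
      rw [h3]; nlinarith
  have hmin : ∀ u : ℝ, ‖a - t • v‖ ≤ ‖a - u • v‖ := by
    intro u
    rcases eq_or_ne u t with rfl | h
    · exact le_refl _
    · exact (hstrict u h).le
  have hspec : ∀ u : ℝ, ‖a - (mu a v) • v‖ ≤ ‖a - u • v‖ :=
    Classical.epsilon_spec (p := fun t : ℝ => ∀ u : ℝ, ‖a - t • v‖ ≤ ‖a - u • v‖) ⟨t, hmin⟩
  have hmu : mu a v = t := by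
    by_contra hmu
    exact absurd (hspec t) (not_le.mpr (hstrict _ hmu))
  rw [hmu]; exact ht

end MuChar

theorem stmt7 {m n : ℕ} (hm : 2 ≤ m) (hn : 2 ≤ n) (A : Fin m → Fin n → ℝ)
    (hA : PreservesCheb A) (v₁ v₂ : Fin n → ℝ) (h₁ : Cheb v₁) (h₂ : Cheb v₂)
    (hs : ∀ j, Real.sign (v₁ j) = Real.sign (v₂ j)) :
    ∀ i, Real.sign (phi A v₁ i) = Real.sign (phi A v₂ i) := by
  intro i
  set a := A i with ha
  have hn0 : 0 < n := by omega
  have hne : (Finset.univ : Finset (Fin n)).Nonempty := ⟨⟨0, hn0⟩, Finset.mem_univ _⟩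
  set s : Fin n → ℝ := fun j => Real.sign (v₁ j) with hsdef
  have hs1 : ∀ j, s j = 1 ∨ s j = -1 := by
    intro j
    rcases lt_or_gt_of_ne (h₁ j) with h | h
    · right; simp [hsdef, Real.sign_of_neg h]
    · left; simp [hsdef, Real.sign_of_pos h]
  have hsv₁ : ∀ j, s j * v₁ j = |v₁ j| := by
    intro j
    rcases lt_or_gt_of_ne (h₁ j) with h | h
    · simp [hsdef, Real.sign_of_neg h, abs_of_neg h]
    · simp [hsdef, Real.sign_of_pos h, abs_of_pos h]
  have hsv₂ : ∀ j, s j * v₂ j = |v₂ j| := by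
    intro j
    rcases lt_or_gt_of_ne (h₂ j) with h | h
    · simp [hsdef, hs j, Real.sign_of_neg h, abs_of_neg h]
    · simp [hsdef, hs j, Real.sign_of_pos h, abs_of_pos h]
  set w : ℝ → Fin n → ℝ := fun t j => v₁ j + t * (v₂ j - v₁ j) with hw
  have hwkey : ∀ t ∈ Set.Icc (0:ℝ) 1, (∀ j, s j * w t j = |w t j|) ∧ (∀ j, w t j ≠ 0) := by
    intro t ht
    have key : ∀ j, 0 < s j * w t j := by
      intro j
      have e : s j * w t j = (1 - t) * (s j * v₁ j) + t * (s j * v₂ j) := by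
        simp only [hw]; ring
      rw [hsv₁ j, hsv₂ j] at e
      have ha1 : 0 < |v₁ j| := abs_pos.mpr (h₁ j)
      have ha2 : 0 < |v₂ j| := abs_pos.mpr (h₂ j)
      rcases eq_or_lt_of_le ht.2 with rfl | hlt
      · rw [e]; nlinarith [ha2]
      · have h1 : 0 < (1 - t) * |v₁ j| := by nlinarith
        have h2 : 0 ≤ t * |v₂ j| := mul_nonneg ht.1 ha2.le
        rw [e]; linarith
    constructor
    · intro j
      rcases hs1 j with h | h
      · have hpos : 0 < w t j := by have := key j; rw [h, one_mul] at this; exact this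
        rw [h, one_mul, abs_of_pos hpos]
      · have hneg : w t j < 0 := by have := key j; rw [h] at this; linarith
        rw [h, abs_of_neg hneg]; ring
    · intro j hzero
      have := key j
      rw [hzero, mul_zero] at this
      exact lt_irrefl 0 this
  set g : ℝ → ℝ := fun t => mu a (w t) with hg
  have hzero : ∀ t ∈ Set.Icc (0:ℝ) 1, Gf hne a s (w t) (g t) = 0 := fun t ht =>
    mu_Gf_zero hne a s (w t) hs1 (hwkey t ht).1 (hwkey t ht).2
  have hgne : ∀ t ∈ Set.Icc (0:ℝ) 1, g t ≠ 0 := by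
    intro t ht
    exact hA.1 (w t) (hwkey t ht).2 i
  have hw0 : w 0 = v₁ := by funext j; simp [hw]
  have hw1 : w 1 = v₂ := by funext j; simp [hw]
  have hphi0 : phi A v₁ i = g 0 := by rw [hg]; simp only [phi, hw0, ha]
  have hphi1 : phi A v₂ i = g 1 := by rw [hg]; simp only [phi, hw1, ha]
  have hGc : ∀ u : ℝ, Continuous fun t => Gf hne a s (w t) u := by
    intro u
    simp only [Gf, Pf, Qf, hw]
    apply Continuous.sub <;> exact Continuous.finset_sup'_apply hne fun j _ => by fun_prop
  have hcont : ContinuousOn g (Set.Icc (0:ℝ) 1) := by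
    intro t₀ ht₀
    rw [Metric.continuousWithinAt_iff]
    intro ε hε
    have hlt : Gf hne a s (w t₀) (g t₀ - ε / 2) < 0 := by
      have h := Gf_strict hne a s (w t₀) (hwkey t₀ ht₀).1 (hwkey t₀ ht₀).2
        (show g t₀ - ε / 2 < g t₀ by linarith)
      rw [hzero t₀ ht₀] at h
      exact h
    have hgt : 0 < Gf hne a s (w t₀) (g t₀ + ε / 2) := by
      have h := Gf_strict hne a s (w t₀) (hwkey t₀ ht₀).1 (hwkey t₀ ht₀).2
        (show g t₀ < g t₀ + ε / 2 by linarith)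
      rw [hzero t₀ ht₀] at h
      exact h
    have e1 : ∀ᶠ t in nhds t₀, Gf hne a s (w t) (g t₀ - ε / 2) < 0 :=
      Filter.Tendsto.eventually_lt_const hlt ((hGc (g t₀ - ε / 2)).continuousAt)
    have e2 : ∀ᶠ t in nhds t₀, 0 < Gf hne a s (w t) (g t₀ + ε / 2) :=
      Filter.Tendsto.eventually_const_lt hgt ((hGc (g t₀ + ε / 2)).continuousAt)
    obtain ⟨δ, hδ, hδprop⟩ := Metric.eventually_nhds_iff.mp (e1.and e2)
    refine ⟨δ, hδ, ?_⟩
    intro t htmem hdist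
    obtain ⟨H1, H2⟩ := hδprop hdist
    have hz := hzero t htmem
    have hlow : g t₀ - ε / 2 < g t := by
      by_contra hcon
      push_neg at hcon
      have hm := Gf_mono hne a s (w t) (hwkey t htmem).1 (hwkey t htmem).2 hcon
      rw [hz] at hm
      linarith
    have hhigh : g t < g t₀ + ε / 2 := by
      by_contra hcon
      push_neg at hcon
      have hm := Gf_mono hne a s (w t) (hwkey t htmem).1 (hwkey t htmem).2 hcon
      rw [hz] at hm
      linarith
    rw [Real.dist_eq, abs_lt]
    constructor <;> linarith
  have h0mem : (0:ℝ) ∈ Set.Icc (0:ℝ) 1 := ⟨le_refl 0, zero_le_one⟩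
  have h1mem : (1:ℝ) ∈ Set.Icc (0:ℝ) 1 := ⟨zero_le_one, le_refl 1⟩
  have hg0 : g 0 ≠ 0 := hgne 0 h0mem
  have hg1 : g 1 ≠ 0 := hgne 1 h1mem
  have hIVT : ¬ ((0:ℝ) ∈ Set.uIcc (g 0) (g 1)) := by
    intro hmem
    have hsub := intermediate_value_uIcc
      (show ContinuousOn g (Set.uIcc (0:ℝ) 1) by rw [Set.uIcc_of_le zero_le_one]; exact hcont)
    obtain ⟨t, htmem, htz⟩ := hsub hmem
    rw [Set.uIcc_of_le zero_le_one] at htmem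
    exact hgne t htmem htz
  rw [hphi0, hphi1]
  rcases lt_or_gt_of_ne hg0 with hc0 | hc0 <;> rcases lt_or_gt_of_ne hg1 with hc1 | hc1
  · rw [Real.sign_of_neg hc0, Real.sign_of_neg hc1]
  · exact absurd (Set.mem_uIcc.mpr (Or.inl ⟨hc0.le, hc1.le⟩)) hIVT
  · exact absurd (Set.mem_uIcc.mpr (Or.inr ⟨hc1.le, hc0.le⟩)) hIVT
  · rw [Real.sign_of_pos hc0, Real.sign_of_pos hc1]
end

section
/- Let A ∈ ℝ^{m×n} preserve Chebyshev systems. Define the sign dependency graph G^{sd}_A on vertices {1,…,n} with an edge from k to l iff k = 𝔧(𝔦(l)), where 𝔦(j) is the row index of the maximum-absolute-value entry of column j and 𝔧(i) the column index of the maximum-absolute-value entry of row i. Then each vertex has exactly one incoming edge, the graph contains at least one loop (vertex j with 𝔧(𝔦(j)) = j), and every directed cycle is a loop. -/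
open Filter

/-
Take the potential `g j = |A (I j) j|`, the largest entry of column `j`. Along an edge
`j ↦ J (I j)` it cannot decrease, since `|A (I j) (J (I j))|` dominates `|A (I j) j|` and is
dominated by the maximum of its own column; and it strictly increases unless `j` is a loop,
because row maxima are strict. So a vertex maximizing `g` is a loop, and a cycle, along which `g` must be constant, has
only loop edges.
-/

section Potential

variable {α β : Type*} [LinearOrder β] {f : α → α} {g : α → β}

theorem le_apply_of_eq_or_lt (hg : ∀ x, f x = x ∨ g x < g (f x)) (x : α) : g x ≤ g (f x) := by
  rcases hg x with h | h
  · rw [h]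
  · exact h.le

theorem exists_apply_eq_self_of_eq_or_lt [Finite α] [Nonempty α]
    (hg : ∀ x, f x = x ∨ g x < g (f x)) : ∃ x, f x = x := by
  obtain ⟨x, hx⟩ := Finite.exists_max g
  exact ⟨x, (hg x).resolve_right (hx (f x)).not_gt⟩

theorem eq_of_cycle_of_eq_or_lt (hg : ∀ x, f x = x ∨ g x < g (f x)) {p : ℕ} {c : ℕ → α}
    (hc : ∀ k < p, c k = f (c (k + 1))) (hp : c p = c 0) : ∀ k ≤ p, c k = c 0 := by
  have anti : ∀ b ≤ p, ∀ a ≤ b, g (c b) ≤ g (c a) := by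
    intro b hb a hab
    induction b, hab using Nat.le_induction with
    | base => exact le_rfl
    | succ b _ ih =>
      calc g (c (b + 1)) ≤ g (f (c (b + 1))) := le_apply_of_eq_or_lt hg _
        _ = g (c b) := by rw [hc b (by omega)]
        _ ≤ g (c a) := ih (by omega)
  have step : ∀ k < p, c (k + 1) = c k := by
    intro k hk
    rcases hg (c (k + 1)) with h | h
    · rw [hc k hk, h]
    · refine absurd h (not_lt.mpr ?_)
      calc g (f (c (k + 1))) = g (c k) := by rw [hc k hk]
        _ ≤ g (c 0) := anti k hk.le 0 (Nat.zero_le k)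
        _ = g (c p) := by rw [hp]
        _ ≤ g (c (k + 1)) := anti p le_rfl (k + 1) hk
  intro k hk
  induction k with
  | zero => rfl
  | succ k ih => rw [step k hk, ih (by omega)]

end Potential

theorem colMax_eq_or_lt_colMax {ι κ β : Type*} [LinearOrder β] (B : ι → κ → β)
    {I : κ → ι} {J : ι → κ} (hI : ∀ i j, B i j ≤ B (I j) j)
    (hJ : ∀ i j, j ≠ J i → B i j < B i (J i)) (j : κ) :
    J (I j) = j ∨ B (I j) j < B (I (J (I j))) (J (I j)) := by
  by_cases h : J (I j) = j
  · exact Or.inl h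
  · exact Or.inr ((hJ (I j) j (Ne.symm h)).trans_le (hI _ _))

theorem stmt12_general {m n : ℕ} (hn : 2 ≤ n) (A : Fin m → Fin n → ℝ)
    (I : Fin n → Fin m) (J : Fin m → Fin n)
    (hI : ∀ j i, i ≠ I j → |A i j| < |A (I j) j|)
    (hJ : ∀ i j, j ≠ J i → |A i j| < |A i (J i)|) :
    (∀ l : Fin n, ∃! k : Fin n, k = J (I l)) ∧
    (∃ j : Fin n, J (I j) = j) ∧
    (∀ p : ℕ, ∀ c : ℕ → Fin n, 1 ≤ p → (∀ k < p, c k = J (I (c (k + 1)))) → c p = c 0 →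
      ∀ k ≤ p, c k = c 0) := by
  have hcol : ∀ i j, |A i j| ≤ |A (I j) j| := fun i j => by
    rcases eq_or_ne i (I j) with rfl | h
    · exact le_rfl
    · exact (hI j i h).le
  have hpot := colMax_eq_or_lt_colMax (fun i j => |A i j|) hcol hJ
  have : Nonempty (Fin n) := ⟨⟨0, by omega⟩⟩
  exact ⟨fun _ => existsUnique_eq, exists_apply_eq_self_of_eq_or_lt hpot,
    fun _ _ _ hc hp => eq_of_cycle_of_eq_or_lt hpot hc hp⟩

theorem stmt12 {m n : ℕ} (hm : 2 ≤ m) (hn : 2 ≤ n) (A : Fin m → Fin n → ℝ)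
    (I : Fin n → Fin m) (J : Fin m → Fin n)
    (hI : ∀ j i, i ≠ I j → |A i j| < |A (I j) j|)
    (hJ : ∀ i j, j ≠ J i → |A i j| < |A i (J i)|) :
    (∀ l : Fin n, ∃! k : Fin n, k = J (I l)) ∧
    (∃ j : Fin n, J (I j) = j) ∧
    (∀ p : ℕ, ∀ c : ℕ → Fin n, 1 ≤ p → (∀ k < p, c k = J (I (c (k + 1)))) → c p = c 0 →
      ∀ k ≤ p, c k = c 0) :=
  stmt12_general hn A I J hI hJ
end

section
/- Let A ∈ ℝ^{m×n} preserve Chebyshev systems and let 𝒱 : {-1,1}ⁿ → {-1,1}ⁿ be the sign transition map of the alternating minimization method. Then for every t ∈ {-1,1}ⁿ the sequence t, 𝒱(t), 𝒱²(t), … is eventually constant; in particular 𝒱ᵖ⁻¹(t) is a fixed point of 𝒱, where p is the depth of the sign dependency graph G^{sd}_A. In particular 𝒱 has at least one fixed point. -/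
open Filter

/-- The sign transition map of the alternating minimization method, written explicitly via
the unique maximizing indices `I` (columns) and `J` (rows). -/
noncomputable def Vmap {m n : ℕ} (A : Fin m → Fin n → ℝ) (I : Fin n → Fin m)
    (J : Fin m → Fin n) (t : Fin n → ℝ) : Fin n → ℝ :=
  fun j => Real.sign (A (I j) j) * Real.sign (A (I j) (J (I j))) * t (J (I j))

/-- Auxiliary: the index map `j ↦ J (I j)`. -/
def fAux {m n : ℕ} (I : Fin n → Fin m) (J : Fin m → Fin n) (j : Fin n) : Fin n :=
  J (I j)

/-- Auxiliary: the sign multiplier of `Vmap`. -/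
noncomputable def sigAux {m n : ℕ} (A : Fin m → Fin n → ℝ) (I : Fin n → Fin m)
    (J : Fin m → Fin n) (j : Fin n) : ℝ :=
  Real.sign (A (I j) j) * Real.sign (A (I j) (J (I j)))

lemma VmapEq {m n : ℕ} (A : Fin m → Fin n → ℝ) (I : Fin n → Fin m) (J : Fin m → Fin n)
    (t : Fin n → ℝ) (j : Fin n) :
    Vmap A I J t j = sigAux A I J j * t (fAux I J j) := by
  simp [Vmap, sigAux, fAux, mul_assoc]

lemma iterFormula {m n : ℕ} (A : Fin m → Fin n → ℝ) (I : Fin n → Fin m) (J : Fin m → Fin n) :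
    ∀ (k : ℕ) (t : Fin n → ℝ) (j : Fin n),
    (Vmap A I J)^[k] t j
      = (∏ i ∈ Finset.range k, sigAux A I J ((fAux I J)^[i] j)) * t ((fAux I J)^[k] j) := by
  intro k
  induction k with
  | zero => simp
  | succ k ih =>
    intro t j
    rw [Function.iterate_succ_apply, ih, VmapEq, Finset.prod_range_succ,
      Function.iterate_succ_apply']
    ring

theorem stmt14 {m n : ℕ} (hm : 2 ≤ m) (hn : 2 ≤ n) (A : Fin m → Fin n → ℝ)
    (I : Fin n → Fin m) (J : Fin m → Fin n)
    (hI : ∀ j i, i ≠ I j → |A i j| < |A (I j) j|)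
    (hJ : ∀ i j, j ≠ J i → |A i j| < |A i (J i)|)
    (p : ℕ)
    (hp1 : ∃ c : ℕ → Fin n, (∀ i j, i < p → j < p → c i = c j → i = j) ∧
      ∀ k, k + 1 < p → c k = J (I (c (k + 1))))
    (hp2 : ∀ q : ℕ, ∀ c : ℕ → Fin n, (∀ i j, i < q → j < q → c i = c j → i = j) →
      (∀ k, k + 1 < q → c k = J (I (c (k + 1)))) → q ≤ p) :
    (∀ t : Fin n → ℝ, (∀ j, t j = 1 ∨ t j = -1) →
      (∀ k, p - 1 ≤ k → (Vmap A I J)^[k] t = (Vmap A I J)^[p - 1] t) ∧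
      Vmap A I J ((Vmap A I J)^[p - 1] t) = (Vmap A I J)^[p - 1] t) ∧
    ∃ s : Fin n → ℝ, (∀ j, s j = 1 ∨ s j = -1) ∧ Vmap A I J s = s := by
  -- basic nonvanishing facts
  have hm' : ∀ j : Fin n, A (I j) j ≠ 0 := by
    intro j h0
    obtain ⟨i, hi⟩ := Fintype.exists_ne_of_one_lt_card (by rw [Fintype.card_fin]; omega) (I j)
    have := hI j i hi
    rw [h0, abs_zero] at this
    exact (abs_nonneg _).not_gt this
  have hn' : ∀ i : Fin m, A i (J i) ≠ 0 := by
    intro i h0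
    obtain ⟨j, hj⟩ := Fintype.exists_ne_of_one_lt_card (by rw [Fintype.card_fin]; omega) (J i)
    have := hJ i j hj
    rw [h0, abs_zero] at this
    exact (abs_nonneg _).not_gt this
  have hsig : ∀ j, sigAux A I J j = 1 ∨ sigAux A I J j = -1 := by
    intro j
    rcases Real.sign_apply_eq_of_ne_zero _ (hm' j) with h1 | h1 <;>
      rcases Real.sign_apply_eq_of_ne_zero _ (hn' (I j)) with h2 | h2 <;>
        simp [sigAux, h1, h2]
  have hsigfix : ∀ j, fAux I J j = j → sigAux A I J j = 1 := by
    intro j hj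
    have heq : sigAux A I J j = Real.sign (A (I j) j) * Real.sign (A (I j) j) := by
      unfold sigAux
      rw [show J (I j) = j from hj]
    rcases Real.sign_apply_eq_of_ne_zero _ (hm' j) with h1 | h1 <;> rw [heq, h1] <;> norm_num
  -- the potential strictly increases along non-fixed steps
  have hM : ∀ j, fAux I J j ≠ j → |A (I j) j| < |A (I (fAux I J j)) (fAux I J j)| := by
    intro j hj
    have h1 : |A (I j) j| < |A (I j) (J (I j))| := hJ (I j) j (fun h => hj (by simp [fAux, ← h]))
    have h2 : |A (I j) (fAux I J j)| ≤ |A (I (fAux I J j)) (fAux I J j)| := by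
      by_cases h : I j = I (fAux I J j)
      · rw [h]
      · exact (hI _ _ h).le
    exact lt_of_lt_of_le (by simpa [fAux] using h1) h2
  -- orbit reaches a fixed point in at most p-1 steps
  have hfix : ∀ j, fAux I J ((fAux I J)^[p - 1] j) = (fAux I J)^[p - 1] j := by
    intro j
    by_contra hcon
    have hnf : ∀ a, a ≤ p - 1 → fAux I J ((fAux I J)^[a] j) ≠ (fAux I J)^[a] j := by
      intro a ha hfa
      apply hcon
      have heq : (fAux I J)^[p - 1] j = (fAux I J)^[p - 1 - a] ((fAux I J)^[a] j) := by
        rw [← Function.iterate_add_apply, Nat.sub_add_cancel ha]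
      rw [heq, Function.iterate_fixed hfa]
      exact hfa
    have hstep : ∀ a, a ≤ p - 1 → |A (I ((fAux I J)^[a] j)) ((fAux I J)^[a] j)|
        < |A (I ((fAux I J)^[a + 1] j)) ((fAux I J)^[a + 1] j)| := by
      intro a ha
      rw [Function.iterate_succ_apply']
      exact hM _ (hnf a ha)
    have hmono : ∀ b a, a < b → b ≤ p → |A (I ((fAux I J)^[a] j)) ((fAux I J)^[a] j)|
        < |A (I ((fAux I J)^[b] j)) ((fAux I J)^[b] j)| := by
      intro b
      induction b with
      | zero => intro a ha hb; omega
      | succ b ih =>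
        intro a ha hb
        have hb' : b ≤ p - 1 := by omega
        have last := hstep b hb'
        rcases Nat.lt_succ_iff_lt_or_eq.mp ha with h | h
        · exact (ih a h (by omega)).trans last
        · rw [h]; exact last
    have hchain : p + 1 ≤ p := by
      apply hp2 (p + 1) (fun k => (fAux I J)^[p - k] j)
      · intro a b ha hb hab
        by_contra hne
        have h1 : p - a ≠ p - b := by omega
        rcases h1.lt_or_gt with h | h
        · have := hmono (p - b) (p - a) h (Nat.sub_le _ _)
          rw [hab] at this; exact lt_irrefl _ this
        · have := hmono (p - a) (p - b) h (Nat.sub_le _ _)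
          rw [hab] at this; exact lt_irrefl _ this
      · intro k hk
        show (fAux I J)^[p - k] j = J (I ((fAux I J)^[p - (k + 1)] j))
        have heq : p - k = (p - (k + 1)) + 1 := by omega
        rw [heq, Function.iterate_succ_apply']
        rfl
    omega
  -- stabilization of iterates
  have hiterfix : ∀ (j : Fin n) (k : ℕ), p - 1 ≤ k →
      (fAux I J)^[k] j = (fAux I J)^[p - 1] j := by
    intro j k hk
    induction k, hk using Nat.le_induction with
    | base => rfl
    | succ k hk ih => rw [Function.iterate_succ_apply', ih, hfix]
  have hprodfix : ∀ (j : Fin n) (k : ℕ), p - 1 ≤ k →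
      (∏ i ∈ Finset.range k, sigAux A I J ((fAux I J)^[i] j))
        = ∏ i ∈ Finset.range (p - 1), sigAux A I J ((fAux I J)^[i] j) := by
    intro j k hk
    induction k, hk using Nat.le_induction with
    | base => rfl
    | succ k hk ih =>
      rw [Finset.prod_range_succ, ih, hiterfix j k hk, hsigfix _ (hfix j), mul_one]
  have hstab : ∀ (t : Fin n → ℝ) (k : ℕ), p - 1 ≤ k →
      (Vmap A I J)^[k] t = (Vmap A I J)^[p - 1] t := by
    intro t k hk
    funext j
    rw [iterFormula, iterFormula, hprodfix j k hk, hiterfix j k hk]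
  have hfixV : ∀ t : Fin n → ℝ,
      Vmap A I J ((Vmap A I J)^[p - 1] t) = (Vmap A I J)^[p - 1] t := by
    intro t
    have h := hstab t (p - 1 + 1) (by omega)
    rwa [Function.iterate_succ_apply'] at h
  -- preservation of sign vectors
  have hpm : ∀ (k : ℕ) (t : Fin n → ℝ), (∀ j, t j = 1 ∨ t j = -1) →
      ∀ j, (Vmap A I J)^[k] t j = 1 ∨ (Vmap A I J)^[k] t j = -1 := by
    intro k
    induction k with
    | zero => intro t ht j; exact ht j
    | succ k ih =>
      intro t ht j
      rw [Function.iterate_succ_apply']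
      rw [VmapEq]
      rcases hsig j with h1 | h1 <;>
        rcases ih t ht (fAux I J j) with h2 | h2 <;> rw [h1, h2] <;> norm_num
  refine ⟨fun t _ => ⟨hstab t, hfixV t⟩,
    (Vmap A I J)^[p - 1] (fun _ => 1), hpm (p - 1) _ (fun _ => Or.inl rfl), hfixV _⟩
end

section
/- Let A ∈ ℝ^{m×n} preserve Chebyshev systems, let F ⊆ {1,…,n} be the set of loop vertices of G^{sd}_A with |F| = k, and let t₁, t₂ ∈ {-1,1}ⁿ be fixed points of the sign transition map 𝒱. If (t₁)ⱼ = (t₂)ⱼ for all j ∈ F, then t₁ = t₂. Consequently 𝒱 has at most 2ᵏ fixed points. -/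
open Filter

/-! A fixed point `t` of the sign transition map satisfies `t j = ± t (σ j)` with `σ = J ∘ I`.
Along every edge `j → σ j` that is not a loop the column maximum `|A (I j) j|` strictly
increases (first along the row `I j`, then along the column `σ j`), so `t` is determined, by
well-founded recursion, by its values on the loops of `σ`. Restriction to the `k` loops is
therefore injective on sign vectors fixed by the map, which gives at most `2 ^ k` of them. -/

theorem eq_of_eqOn_fixedPoints {α β γ : Type*} [Finite α] [Preorder β] (σ : α → α) (f : α → β)
    (hf : ∀ j, σ j ≠ j → f j < f (σ j)) {s₁ s₂ : α → γ}
    (hstep : ∀ j, s₁ (σ j) = s₂ (σ j) → s₁ j = s₂ j)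
    (hfix : ∀ j, σ j = j → s₁ j = s₂ j) : s₁ = s₂ := by
  let r : α → α → Prop := fun a b => f b < f a
  have : IsTrans α r := ⟨fun _ _ _ hab hbc => hbc.trans hab⟩
  have : Std.Irrefl r := ⟨fun a => lt_irrefl (f a)⟩
  funext j
  induction j using (Finite.wellFounded_of_trans_of_irrefl r).induction with
  | _ j ih =>
    by_cases hj : σ j = j
    · exact hfix j hj
    · exact hstep j (ih (σ j) (hf j hj))

theorem ncard_le_ncard_pow_of_injOn_restrict {α β : Type*} [Finite α] {S : Set (α → β)}
    {V : Set β} (hV : V.Finite) (F : Set α) (hS : ∀ t ∈ S, ∀ j, t j ∈ V)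
    (hinj : ∀ t₁ ∈ S, ∀ t₂ ∈ S, Set.EqOn t₁ t₂ F → t₁ = t₂) : S.ncard ≤ V.ncard ^ F.ncard := by
  have := hV.to_subtype
  let res : S → (F → V) := fun t j => ⟨t.1 j, hS t t.2 j⟩
  have hres : Function.Injective res := fun t₁ t₂ h => Subtype.ext <|
    hinj t₁ t₁.2 t₂ t₂.2 fun j hj => congrArg Subtype.val (congrFun h ⟨j, hj⟩)
  simpa only [Nat.card_coe_set_eq, Nat.card_fun] using Nat.card_le_card_of_injective res hres

section SignTransition

variable {m n : ℕ} {A : Fin m → Fin n → ℝ} {I : Fin n → Fin m} {J : Fin m → Fin n}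

theorem abs_lt_abs_of_ne_loop (hI : ∀ j i, i ≠ I j → |A i j| < |A (I j) j|)
    (hJ : ∀ i j, j ≠ J i → |A i j| < |A i (J i)|) {j : Fin n} (hj : J (I j) ≠ j) :
    |A (I j) j| < |A (I (J (I j))) (J (I j))| := by
  calc |A (I j) j| < |A (I j) (J (I j))| := hJ (I j) j hj.symm
    _ ≤ |A (I (J (I j))) (J (I j))| := by
      by_cases he : I j = I (J (I j))
      · rw [← he]
      · exact (hI _ _ he).le

theorem Vmap_fixedPoint_eq_of_eq_on_loops (hI : ∀ j i, i ≠ I j → |A i j| < |A (I j) j|)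
    (hJ : ∀ i j, j ≠ J i → |A i j| < |A i (J i)|) {t₁ t₂ : Fin n → ℝ}
    (hf₁ : Vmap A I J t₁ = t₁) (hf₂ : Vmap A I J t₂ = t₂)
    (hF : ∀ j, J (I j) = j → t₁ j = t₂ j) : t₁ = t₂ := by
  refine eq_of_eqOn_fixedPoints (fun j => J (I j)) (fun j => |A (I j) j|)
    (fun j => abs_lt_abs_of_ne_loop hI hJ) (fun j h => ?_) hF
  rw [← congrFun hf₁ j, ← congrFun hf₂ j, Vmap, Vmap, h]

end SignTransition

theorem stmt15_general {m n : ℕ} (A : Fin m → Fin n → ℝ)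
    (I : Fin n → Fin m) (J : Fin m → Fin n)
    (hI : ∀ j i, i ≠ I j → |A i j| < |A (I j) j|)
    (hJ : ∀ i j, j ≠ J i → |A i j| < |A i (J i)|)
    (k : ℕ) (hk : k = Set.ncard {j : Fin n | J (I j) = j})
    (t₁ t₂ : Fin n → ℝ)
    (hf₁ : Vmap A I J t₁ = t₁) (hf₂ : Vmap A I J t₂ = t₂)
    (hF : ∀ j, J (I j) = j → t₁ j = t₂ j) :
    t₁ = t₂ ∧
      Set.ncard {t : Fin n → ℝ | (∀ j, t j = 1 ∨ t j = -1) ∧ Vmap A I J t = t} ≤ 2 ^ k := by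
  refine ⟨Vmap_fixedPoint_eq_of_eq_on_loops hI hJ hf₁ hf₂ hF, ?_⟩
  have hsigns : ({1, -1} : Set ℝ).ncard = 2 := Set.ncard_pair (by norm_num)
  rw [hk, ← hsigns]
  exact ncard_le_ncard_pow_of_injOn_restrict (Set.toFinite _) _ (fun t ht j => ht.1 j)
    fun s₁ hs₁ s₂ hs₂ hst => Vmap_fixedPoint_eq_of_eq_on_loops hI hJ hs₁.2 hs₂.2 hst

theorem stmt15 {m n : ℕ} (hm : 2 ≤ m) (hn : 2 ≤ n) (A : Fin m → Fin n → ℝ)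
    (I : Fin n → Fin m) (J : Fin m → Fin n)
    (hI : ∀ j i, i ≠ I j → |A i j| < |A (I j) j|)
    (hJ : ∀ i j, j ≠ J i → |A i j| < |A i (J i)|)
    (k : ℕ) (hk : k = Set.ncard {j : Fin n | J (I j) = j})
    (t₁ t₂ : Fin n → ℝ) (h₁ : ∀ j, t₁ j = 1 ∨ t₁ j = -1) (h₂ : ∀ j, t₂ j = 1 ∨ t₂ j = -1)
    (hf₁ : Vmap A I J t₁ = t₁) (hf₂ : Vmap A I J t₂ = t₂)
    (hF : ∀ j, J (I j) = j → t₁ j = t₂ j) :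
    t₁ = t₂ ∧
      Set.ncard {t : Fin n → ℝ | (∀ j, t j = 1 ∨ t j = -1) ∧ Vmap A I J t = t} ≤ 2 ^ k :=
  stmt15_general A I J hI hJ k hk t₁ t₂ hf₁ hf₂ hF
end

section
/- Let A ∈ ℝ^{m×n} preserve Chebyshev systems and let v ∈ ℝⁿ be Chebyshev with u = φ(A,v). If ‖A - u vᵀ‖_C = E(A,v), i.e., the first step of alternating minimization already attains the limit error, then the triple (A, u, v) admits a two-dimensional alternance. -/
/-!
Alternating minimization never increases the error, so if the limit error equals the first one,
every half-step keeps it. A half-step that keeps the error cannot move the coefficient of a row (or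
column) attaining the maximum, because the best approximation by multiples of a Chebyshev vector is
unique. Hence the sets of maximal residual positions shrink along the iteration, with unchanged
signs `τ`, and eventually stabilise. On the stable set, equioscillation of the best approximations
gives every point a partner of opposite sign in its column (from the `ψ` half-step) and in its row
(from the `φ` half-step); alternately following row and column partners in this finite set closes
up into a two-dimensional alternance. When the error is `0`, every position is maximal and every
`τ` vanishes, so any 2×2 rectangle is one.
-/

open Filter

/-- The set of positions where the residual attains its maximum absolute value. -/
noncomputable def TSet {m n : ℕ} (A : Fin m → Fin n → ℝ) (u : Fin m → ℝ) (v : Fin n → ℝ) :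
    Set (Fin m × Fin n) :=
  {p | |A p.1 p.2 - u p.1 * v p.2| = Cerr A u v}

/-- The set of columns containing a maximal-residual position. -/
noncomputable def CSet {m n : ℕ} (A : Fin m → Fin n → ℝ) (u : Fin m → ℝ) (v : Fin n → ℝ) :
    Set (Fin n) :=
  {j | ∃ i, (i, j) ∈ TSet A u v}

/-- The sign quantity τ_{ij}(A,u,v) = sign(uᵢ vⱼ (a_{ij} - uᵢ vⱼ)). -/
noncomputable def tau {m n : ℕ} (A : Fin m → Fin n → ℝ) (u : Fin m → ℝ) (v : Fin n → ℝ)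
    (i : Fin m) (j : Fin n) : ℝ :=
  Real.sign (u i * v j * (A i j - u i * v j))

open Function Topology

theorem Real.sign_mul (x y : ℝ) : Real.sign (x * y) = Real.sign x * Real.sign y := by
  rcases lt_trichotomy x 0 with hx | hx | hx <;> rcases lt_trichotomy y 0 with hy | hy | hy <;>
    simp [Real.sign_of_neg, Real.sign_of_pos, hx, hy, mul_pos_of_neg_of_neg, mul_neg_of_neg_of_pos,
      mul_neg_of_pos_of_neg]

theorem exists_forall_norm_sub_smul_le_s17 {E : Type*} [NormedAddCommGroup E] [NormedSpace ℝ E]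
    [FiniteDimensional ℝ E] (b w : E) : ∃ t : ℝ, ∀ s : ℝ, ‖b - t • w‖ ≤ ‖b - s • w‖ := by
  obtain ⟨y, hy, hdist⟩ :=
    (Submodule.span ℝ {w}).closed_of_finiteDimensional.exists_infDist_eq_dist ⟨0, zero_mem _⟩ b
  obtain ⟨t, rfl⟩ := Submodule.mem_span_singleton.mp hy
  refine ⟨t, fun s => ?_⟩
  rw [← dist_eq_norm, ← dist_eq_norm, ← hdist]
  exact Metric.infDist_le_dist_of_mem (Submodule.mem_span_singleton.mpr ⟨s, rfl⟩)

theorem exists_abs_eq_norm_s17 {ι : Type*} [Fintype ι] [Nonempty ι] (x : ι → ℝ) :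
    ∃ j, |x j| = ‖x‖ := by
  obtain ⟨j, hj⟩ := Finite.exists_max fun j => |x j|
  refine ⟨j, le_antisymm (by simpa using norm_le_pi_norm x j) ?_⟩
  exact (pi_norm_le_iff_of_nonneg (abs_nonneg _)).mpr fun i => by simpa using hj i

section BestApproximation

variable {N : ℕ} {b w : Fin N → ℝ} {t : ℝ}

theorem norm_sub_mu_smul_le (b w : Fin N → ℝ) (s : ℝ) : ‖b - mu b w • w‖ ≤ ‖b - s • w‖ :=
  Classical.epsilon_spec (exists_forall_norm_sub_smul_le_s17 b w) s

/-- At a coordinate where the midpoint residual is extremal, both residuals must coincide. -/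
theorem eq_mu_of_norm_le [Nonempty (Fin N)] (hw : Cheb w)
    (ht : ‖b - t • w‖ ≤ ‖b - mu b w • w‖) : t = mu b w := by
  set t' := mu b w
  set M := ‖b - t' • w‖
  have hle₁ : ∀ j, |b j - t * w j| ≤ M := fun j => by
    simpa using (norm_le_pi_norm (b - t • w) j).trans ht
  have hle₂ : ∀ j, |b j - t' * w j| ≤ M := fun j => by
    simpa using norm_le_pi_norm (b - t' • w) j
  obtain ⟨j, hj⟩ := exists_abs_eq_norm_s17 (b - ((t + t') / 2) • w)
  have hmid : M ≤ |(b j - t * w j) + (b j - t' * w j)| / 2 := by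
    calc M ≤ ‖b - ((t + t') / 2) • w‖ := norm_sub_mu_smul_le b w _
      _ = |((b j - t * w j) + (b j - t' * w j)) / 2| := by
        rw [← hj]; congr 1; simp only [Pi.sub_apply, Pi.smul_apply, smul_eq_mul]; ring
      _ = _ := by rw [abs_div, abs_two]
  have hres : b j - t * w j = b j - t' * w j := by
    rcases abs_le.mp (hle₁ j) with ⟨h₁, h₁'⟩
    rcases abs_le.mp (hle₂ j) with ⟨h₂, h₂'⟩
    rcases le_abs'.mp (by linarith : 2 * M ≤ |(b j - t * w j) + (b j - t' * w j)|) with h | h <;>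
      linarith
  exact mul_right_cancel₀ (hw j) (by linarith)

/-- If no extremal residual had the sign of `w`, moving `t` slightly towards `b` would decrease
every extremal residual without letting the others catch up. -/
theorem exists_abs_eq_norm_and_pos (hw : Cheb w) (ht : ∀ s : ℝ, ‖b - t • w‖ ≤ ‖b - s • w‖)
    (hpos : 0 < ‖b - t • w‖) :
    ∃ j, |(b - t • w) j| = ‖b - t • w‖ ∧ 0 < w j * (b - t • w) j := by
  by_contra! hnonpos
  set r := b - t • w
  have hsmall : ∀ j, ∀ᶠ δ in 𝓝[>] (0 : ℝ), |r j + δ * w j| < ‖r‖ := by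
    intro j
    rcases (show |r j| ≤ ‖r‖ by simpa using norm_le_pi_norm r j).lt_or_eq with hlt | heq
    · have hcont : Tendsto (fun δ : ℝ => |r j + δ * w j|) (𝓝[>] 0) (𝓝 |r j|) := by
        have : Continuous fun δ : ℝ => |r j + δ * w j| := by fun_prop
        simpa only [zero_mul, add_zero] using tendsto_nhdsWithin_of_tendsto_nhds (this.tendsto 0)
      exact hcont.eventually_lt_const hlt
    · have hneg : w j * r j < 0 := (hnonpos j heq).lt_of_ne fun h0 => by
        rcases mul_eq_zero.mp h0 with h | h
        · exact hw j h
        · rw [h, abs_zero] at heq; exact hpos.ne heq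
      have hw2 : 0 < w j ^ 2 := by have := hw j; positivity
      filter_upwards [Ioo_mem_nhdsGT (div_pos (neg_pos.mpr hneg) hw2)] with δ ⟨hδ, hδ'⟩
      rw [lt_div_iff₀ hw2] at hδ'
      rw [← heq, ← sq_lt_sq]
      nlinarith
  obtain ⟨δ, hδ⟩ := (Filter.eventually_all.mpr hsmall).exists
  have hlt : ‖b - (t - δ) • w‖ < ‖r‖ := by
    refine (pi_norm_lt_iff hpos).mpr fun j => ?_
    simpa [r, sub_mul, sub_add] using hδ j
  exact (ht (t - δ)).not_gt hlt

theorem exists_abs_eq_norm_and_neg (hw : Cheb w) (ht : ∀ s : ℝ, ‖b - t • w‖ ≤ ‖b - s • w‖)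
    (hpos : 0 < ‖b - t • w‖) :
    ∃ j, |(b - t • w) j| = ‖b - t • w‖ ∧ w j * (b - t • w) j < 0 := by
  have hneg : ∀ s : ℝ, -b - (-s) • w = -(b - s • w) := fun s => by rw [neg_smul]; abel
  obtain ⟨j, hj, hpos'⟩ := exists_abs_eq_norm_and_pos (b := -b) (t := -t) hw
    (fun s => by rw [hneg, norm_neg, ← neg_neg s, hneg, norm_neg]; exact ht _)
    (by rwa [hneg, norm_neg])
  rw [hneg, Pi.neg_apply, abs_neg, norm_neg] at hj
  rw [hneg, Pi.neg_apply, mul_neg, neg_pos] at hpos'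
  exact ⟨j, hj, hpos'⟩

theorem exists_abs_eq_norm_sign_eq_neg (hw : Cheb w) (ht : ∀ s : ℝ, ‖b - t • w‖ ≤ ‖b - s • w‖)
    {j₀ : Fin N} (hj₀ : |(b - t • w) j₀| = ‖b - t • w‖) (hpos : 0 < ‖b - t • w‖) :
    ∃ j, |(b - t • w) j| = ‖b - t • w‖ ∧
      Real.sign (w j * (b - t • w) j) = -Real.sign (w j₀ * (b - t • w) j₀) := by
  have hne : w j₀ * (b - t • w) j₀ ≠ 0 :=
    mul_ne_zero (hw j₀) fun h => by rw [h, abs_zero] at hj₀; exact hpos.ne hj₀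
  rcases hne.lt_or_gt with hlt | hgt
  · obtain ⟨j, hj, hj'⟩ := exists_abs_eq_norm_and_pos hw ht hpos
    exact ⟨j, hj, by rw [Real.sign_of_pos hj', Real.sign_of_neg hlt, neg_neg]⟩
  · obtain ⟨j, hj, hj'⟩ := exists_abs_eq_norm_and_neg hw ht hpos
    exact ⟨j, hj, by rw [Real.sign_of_neg hj', Real.sign_of_pos hgt]⟩

end BestApproximation

section Residual

variable {m n : ℕ} (A : Fin m → Fin n → ℝ) (u : Fin m → ℝ) (v : Fin n → ℝ)

theorem Cerr_nonneg : 0 ≤ Cerr A u v :=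
  Real.iSup_nonneg fun _ => Real.iSup_nonneg fun _ => abs_nonneg _

theorem abs_sub_le_Cerr (i : Fin m) (j : Fin n) : |A i j - u i * v j| ≤ Cerr A u v :=
  le_ciSup_of_le (Finite.bddAbove_range _) i (le_ciSup_of_le (Finite.bddAbove_range _) j le_rfl)

theorem Cerr_le {B : ℝ} (hB : 0 ≤ B) (h : ∀ i j, |A i j - u i * v j| ≤ B) : Cerr A u v ≤ B :=
  Real.iSup_le (fun i => Real.iSup_le (h i) hB) hB

theorem norm_sub_smul_le_Cerr (i : Fin m) : ‖A i - u i • v‖ ≤ Cerr A u v :=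
  (pi_norm_le_iff_of_nonneg (Cerr_nonneg A u v)).mpr fun j => by
    simpa using abs_sub_le_Cerr A u v i j

theorem norm_sub_smul_eq_Cerr {p : Fin m × Fin n} (hp : p ∈ TSet A u v) :
    ‖A p.1 - u p.1 • v‖ = Cerr A u v :=
  (norm_sub_smul_le_Cerr A u v p.1).antisymm <| by
    rw [← show |A p.1 p.2 - u p.1 * v p.2| = Cerr A u v from hp]
    simpa using norm_le_pi_norm (A p.1 - u p.1 • v) p.2

theorem TSet_nonempty [Nonempty (Fin m)] [Nonempty (Fin n)] : (TSet A u v).Nonempty := by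
  obtain ⟨p, hp⟩ := Finite.exists_max fun p : Fin m × Fin n => |A p.1 p.2 - u p.1 * v p.2|
  exact ⟨p, (abs_sub_le_Cerr A u v p.1 p.2).antisymm
    (Cerr_le A u v (abs_nonneg _) fun i j => hp (i, j))⟩

theorem Cerr_phi_le (w : Fin n → ℝ) : Cerr A (phi A w) w ≤ Cerr A u w :=
  Cerr_le A _ w (Cerr_nonneg A u w) fun i j =>
    calc |A i j - phi A w i * w j| ≤ ‖A i - phi A w i • w‖ := by
          simpa using norm_le_pi_norm (A i - phi A w i • w) j
      _ ≤ ‖A i - u i • w‖ := norm_sub_mu_smul_le (A i) w (u i)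
      _ ≤ Cerr A u w := norm_sub_smul_le_Cerr A u w i

theorem Cerr_swap : Cerr (swap A) v u = Cerr A u v :=
  le_antisymm
    (Cerr_le _ v u (Cerr_nonneg A u v) fun j i => by
      simpa only [swap, mul_comm] using abs_sub_le_Cerr A u v i j)
    (Cerr_le A u v (Cerr_nonneg _ v u) fun i j => by
      simpa only [swap, mul_comm] using abs_sub_le_Cerr (swap A) v u j i)

theorem mem_TSet_swap {i : Fin m} {j : Fin n} :
    (j, i) ∈ TSet (swap A) v u ↔ (i, j) ∈ TSet A u v := by
  simp only [TSet, Set.mem_ofPred_eq, Cerr_swap, swap, mul_comm]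

theorem tau_swap (i : Fin m) (j : Fin n) : tau (swap A) v u j i = tau A u v i j := by
  simp only [tau, swap, mul_comm]

theorem Cerr_psi_le : Cerr A u (psi A u) ≤ Cerr A u v := by
  rw [← Cerr_swap, ← Cerr_swap A u v]
  exact Cerr_phi_le (swap A) v u

end Residual

section Refinement

variable {m n : ℕ} (A : Fin m → Fin n → ℝ)

def TSetRefines (x y : (Fin m → ℝ) × (Fin n → ℝ)) : Prop :=
  ∀ p ∈ TSet A x.1 x.2, p ∈ TSet A y.1 y.2 ∧ x.1 p.1 = y.1 p.1 ∧ x.2 p.2 = y.2 p.2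

variable {A}

theorem TSetRefines.refl (x : (Fin m → ℝ) × (Fin n → ℝ)) : TSetRefines A x x :=
  fun _ hp => ⟨hp, rfl, rfl⟩

theorem TSetRefines.trans {x y z : (Fin m → ℝ) × (Fin n → ℝ)} (hxy : TSetRefines A x y)
    (hyz : TSetRefines A y z) : TSetRefines A x z := fun p hp =>
  let ⟨hpy, h₁, h₂⟩ := hxy p hp
  let ⟨hpz, h₁', h₂'⟩ := hyz p hpy
  ⟨hpz, h₁.trans h₁', h₂.trans h₂'⟩

theorem TSetRefines.tau_eq {x y : (Fin m → ℝ) × (Fin n → ℝ)} (h : TSetRefines A x y)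
    {p : Fin m × Fin n} (hp : p ∈ TSet A x.1 x.2) :
    tau A x.1 x.2 p.1 p.2 = tau A y.1 y.2 p.1 p.2 := by
  obtain ⟨-, h₁, h₂⟩ := h p hp
  simp only [tau, h₁, h₂]

theorem TSetRefines.of_swap {x y : (Fin m → ℝ) × (Fin n → ℝ)}
    (h : TSetRefines (swap A) x.swap y.swap) : TSetRefines A x y := fun p hp => by
  obtain ⟨hpy, h₁, h₂⟩ := h p.swap ((mem_TSet_swap A x.1 x.2).mpr hp)
  exact ⟨(mem_TSet_swap A y.1 y.2).mp hpy, h₂, h₁⟩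

/-- A row attaining a non-increased error is already best approximated, so by uniqueness its
coefficient cannot have changed. -/
theorem tSetRefines_phi {u : Fin m → ℝ} {w : Fin n → ℝ} (hw : Cheb w)
    (hE : Cerr A (phi A w) w = Cerr A u w) : TSetRefines A (phi A w, w) (u, w) := by
  intro p hp
  have : Nonempty (Fin n) := ⟨p.2⟩
  have hrow : ‖A p.1 - phi A w p.1 • w‖ = Cerr A (phi A w) w := norm_sub_smul_eq_Cerr A _ _ hp
  have hu : u p.1 = phi A w p.1 :=
    eq_mu_of_norm_le hw ((norm_sub_smul_le_Cerr A u w p.1).trans_eq (hE.symm.trans hrow.symm))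
  refine ⟨?_, hu.symm, rfl⟩
  change |A p.1 p.2 - u p.1 * w p.2| = Cerr A u w
  rw [hu, ← hE]
  exact hp

theorem tSetRefines_psi {u : Fin m → ℝ} {v : Fin n → ℝ} (hu : Cheb u)
    (hE : Cerr A u (psi A u) = Cerr A u v) : TSetRefines A (u, psi A u) (u, v) :=
  TSetRefines.of_swap <| tSetRefines_phi (A := swap A) (u := v) hu <|
    (Cerr_swap A u (psi A u)).trans (hE.trans (Cerr_swap A u v).symm)

theorem exists_mem_TSet_tau_eq_neg_of_phi {w : Fin n → ℝ} (hw : Cheb w)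
    (hpos : 0 < Cerr A (phi A w) w) {p : Fin m × Fin n} (hp : p ∈ TSet A (phi A w) w) :
    ∃ j, (p.1, j) ∈ TSet A (phi A w) w ∧
      tau A (phi A w) w p.1 j = -tau A (phi A w) w p.1 p.2 := by
  have : Nonempty (Fin n) := ⟨p.2⟩
  have hrow : ‖A p.1 - phi A w p.1 • w‖ = Cerr A (phi A w) w := norm_sub_smul_eq_Cerr A _ _ hp
  have hp₂ : |(A p.1 - phi A w p.1 • w) p.2| = ‖A p.1 - phi A w p.1 • w‖ := by
    rw [hrow, ← show |A p.1 p.2 - phi A w p.1 * w p.2| = Cerr A (phi A w) w from hp]; simp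
  obtain ⟨j, hj, hsign⟩ := exists_abs_eq_norm_sign_eq_neg (t := phi A w p.1) hw
    (norm_sub_mu_smul_le (A p.1) w) hp₂ (hrow ▸ hpos)
  have htau : ∀ j, tau A (phi A w) w p.1 j =
      Real.sign (phi A w p.1) * Real.sign (w j * (A p.1 - phi A w p.1 • w) j) := fun j => by
    rw [tau, ← Real.sign_mul, mul_assoc]; rfl
  refine ⟨j, ?_, ?_⟩
  · change |A p.1 j - phi A w p.1 * w j| = Cerr A (phi A w) w
    rw [← hrow]; simpa using hj
  · rw [htau, htau, hsign, mul_neg]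

theorem exists_mem_TSet_tau_eq_neg_of_psi {u : Fin m → ℝ} (hu : Cheb u)
    (hpos : 0 < Cerr A u (psi A u)) {p : Fin m × Fin n} (hp : p ∈ TSet A u (psi A u)) :
    ∃ i, (i, p.2) ∈ TSet A u (psi A u) ∧
      tau A u (psi A u) i p.2 = -tau A u (psi A u) p.1 p.2 := by
  obtain ⟨i, hi, hτ⟩ := exists_mem_TSet_tau_eq_neg_of_phi (A := swap A) hu
    (by rw [Cerr_swap]; exact hpos) ((mem_TSet_swap A u (psi A u)).mpr hp)
  refine ⟨i, (mem_TSet_swap A u (psi A u)).mp hi, ?_⟩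
  rw [← tau_swap A u (psi A u) i p.2, ← tau_swap A u (psi A u) p.1 p.2]
  exact hτ

end Refinement

section AlternatingCycle

variable {α β : Type*}

/-- The closed path `(r 0, c 0), (r 0, c 1), (r 1, c 1), …, (r (k-1), c k)`, `c k = c 0`, of `2k`
distinct points of `S`, along which `σ` alternates between `ε` and `-ε`; `bs` selects the column
`c (s + 1)` rather than `c s`. -/
def HasAlternatingCycle (S : Set (α × β)) (σ : α × β → ℝ) : Prop :=
  ∃ k : ℕ, 2 ≤ k ∧ ∃ (r : ℕ → α) (c : ℕ → β), c k = c 0 ∧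
    (∀ s t : ℕ, s < k → t < k → ∀ bs bt : Bool,
      ((r s, if bs then c (s + 1) else c s) : α × β) =
        (r t, if bt then c (t + 1) else c t) → s = t ∧ bs = bt) ∧
    (∀ s < k, (r s, c s) ∈ S ∧ (r s, c (s + 1)) ∈ S) ∧
    ∃ ε : ℝ, ∀ s < k, σ (r s, c s) = ε ∧ σ (r s, c (s + 1)) = -ε

theorem HasAlternatingCycle.mono {S S' : Set (α × β)} {σ : α × β → ℝ}
    (h : HasAlternatingCycle S σ) (hS : S ⊆ S') : HasAlternatingCycle S' σ := by
  obtain ⟨k, hk, r, c, hc, hinj, hmem, hσ⟩ := h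
  exact ⟨k, hk, r, c, hc, hinj, fun s hs => ⟨hS (hmem s hs).1, hS (hmem s hs).2⟩, hσ⟩

theorem hasAlternatingCycle_univ_zero [Nontrivial α] [Nontrivial β] :
    HasAlternatingCycle (Set.univ : Set (α × β)) 0 := by
  obtain ⟨a₀, a₁, ha⟩ := exists_pair_ne α
  obtain ⟨b₀, b₁, hb⟩ := exists_pair_ne β
  refine ⟨2, le_rfl, fun s => if s = 0 then a₀ else a₁, fun s => if s = 1 then b₁ else b₀, rfl,
    ?_, fun _ _ => ⟨trivial, trivial⟩, 0, fun _ _ => ⟨rfl, by simp⟩⟩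
  intro s t hs ht bs bt h
  interval_cases s <;> interval_cases t <;> cases bs <;> cases bt <;>
    simp_all [Prod.ext_iff, eq_comm]

theorem Set.Finite.exists_mem_periodicPts {S : Set α} {f : α → α} (hS : S.Finite)
    (hne : S.Nonempty) (hf : Set.MapsTo f S S) : ∃ q ∈ S, q ∈ periodicPts f := by
  obtain ⟨p, hp⟩ := hne
  have := hS.to_subtype
  obtain ⟨a, b, hab, heq⟩ := Finite.exists_ne_map_eq_of_infinite
    fun s : ℕ => (⟨f^[s] p, hf.iterate s hp⟩ : S)
  wlog hlt : a < b generalizing a b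
  · exact this b a hab.symm heq.symm (by omega)
  refine ⟨f^[a] p, hf.iterate a hp, mk_mem_periodicPts (Nat.sub_pos_of_lt hlt) ?_⟩
  rw [IsPeriodicPt, IsFixedPt, ← iterate_add_apply, Nat.sub_add_cancel hlt.le]
  exact congrArg Subtype.val heq.symm

/-- Moving to a row partner and then to a column partner of opposite sign returns to the original
sign, so a periodic orbit of this two-step move traces an alternating cycle. -/
theorem hasAlternatingCycle_of_forall_exists_neg {S : Set (α × β)} {σ : α × β → ℝ}
    (hS : S.Finite) (hne : S.Nonempty) (hσ : ∀ p ∈ S, σ p ≠ 0)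
    (hrow : ∀ p ∈ S, ∃ b, (p.1, b) ∈ S ∧ σ (p.1, b) = -σ p)
    (hcol : ∀ p ∈ S, ∃ a, (a, p.2) ∈ S ∧ σ (a, p.2) = -σ p) : HasAlternatingCycle S σ := by
  have : Nonempty α := ⟨hne.some.1⟩
  have : Nonempty β := ⟨hne.some.2⟩
  choose! col hcolS hcolσ using hrow
  choose! row hrowS hrowσ using hcol
  set f : α × β → α × β := fun p => (row (p.1, col p), col p)
  have hf : ∀ p ∈ S, f p ∈ S ∧ σ (f p) = σ p := fun p hp =>
    ⟨hrowS _ (hcolS p hp), by rw [hrowσ _ (hcolS p hp), hcolσ p hp, neg_neg]⟩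
  obtain ⟨q, hqS, hq⟩ := hS.exists_mem_periodicPts hne fun p hp => (hf p hp).1
  have horbit : ∀ s, f^[s] q ∈ S ∧ σ (f^[s] q) = σ q := by
    intro s
    induction s with
    | zero => exact ⟨hqS, rfl⟩
    | succ s ih =>
      rw [iterate_succ_apply']
      exact ⟨(hf _ ih.1).1, (hf _ ih.1).2.trans ih.2⟩
  set L := minimalPeriod f q
  have hL : f^[L] q = q := iterate_minimalPeriod
  have hinj : ∀ s t, s < L → t < L → f^[s] q = f^[t] q → s = t := fun s t hs ht h =>
    iterate_injOn_Iio_minimalPeriod hs ht h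
  set r : ℕ → α := fun s => (f^[s] q).1
  set c : ℕ → β := fun s => (f^[s] q).2
  have hc : ∀ s, c (s + 1) = col (f^[s] q) := fun s => by
    simp only [c, iterate_succ_apply']; rfl
  have hσ₁ : ∀ s, σ (r s, c s) = σ q := fun s => (horbit s).2
  have hσ₂ : ∀ s, σ (r s, c (s + 1)) = -σ q := fun s => by
    rw [hc, ← (horbit s).2]; exact hcolσ _ (horbit s).1
  have hne' : ∀ s t, (r s, c s) ≠ (r t, c (t + 1)) := fun s t h => by
    have := hσ₁ s; rw [h, hσ₂] at this; exact hσ q hqS (by linarith)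
  -- `f` only depends on the intermediate point `(r s, c (s + 1))`, and `f^[L - 1]` inverts `f`.
  have hinj₂ : ∀ s t, s < L → t < L → (r s, c (s + 1)) = (r t, c (t + 1)) → s = t := by
    intro s t hs ht h
    have hfst : f^[s + 1] q = f^[t + 1] q := by
      rw [hc, hc] at h
      rw [iterate_succ_apply', iterate_succ_apply']
      exact congrArg (fun p => (row p, p.2)) h
    refine hinj s t hs ht ?_
    have hback : ∀ s, f^[L - 1] (f^[s + 1] q) = f^[s] q := fun s => by
      rw [← iterate_add_apply, show L - 1 + (s + 1) = s + L by omega, iterate_add_apply, hL]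
    rw [← hback s, hfst, hback]
  have hL₂ : 2 ≤ L := by
    have hLpos : 0 < L := minimalPeriod_pos_of_mem_periodicPts hq
    by_contra hlt
    have h1 : c 1 = c 0 := by
      simp only [c, show L = 1 by omega] at hL ⊢
      rw [hL, iterate_zero_apply]
    exact hne' 0 0 (by rw [h1])
  refine ⟨L, hL₂, r, c, by simp only [c, hL, iterate_zero_apply], ?_,
    fun s _ => ⟨(horbit s).1, by rw [hc]; exact hcolS _ (horbit s).1⟩,
    σ q, fun s _ => ⟨hσ₁ s, hσ₂ s⟩⟩
  intro s t hs ht bs bt h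
  cases bs <;> cases bt <;> simp only [Bool.false_eq_true, ↓reduceIte] at h
  · exact ⟨hinj s t hs ht h, rfl⟩
  · exact absurd h (hne' s t)
  · exact absurd h.symm (hne' t s)
  · exact ⟨hinj₂ s t hs ht h, rfl⟩

end AlternatingCycle

section AlternatingMinimization

variable {m n : ℕ} (A : Fin m → Fin n → ℝ) (v : Fin n → ℝ)

/-- The half-step iterates `(φ v⁽⁰⁾, v⁽⁰⁾), (φ v⁽⁰⁾, v⁽¹⁾), (φ v⁽¹⁾, v⁽¹⁾), …` of alternating
minimization, where `v⁽ᵏ⁾ = vseq A v k`. -/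
noncomputable def altMinPair (k : ℕ) : (Fin m → ℝ) × (Fin n → ℝ) :=
  (phi A (vseq A v (k / 2)), vseq A v ((k + 1) / 2))

theorem altMinPair_zero : altMinPair A v 0 = (phi A v, v) := rfl

theorem altMinPair_two_mul (k : ℕ) :
    altMinPair A v (2 * k) = (phi A (vseq A v k), vseq A v k) := by
  rw [altMinPair, show 2 * k / 2 = k by omega, show (2 * k + 1) / 2 = k by omega]

theorem altMinPair_two_mul_add_one (k : ℕ) :
    altMinPair A v (2 * k + 1) = (phi A (vseq A v k), vseq A v (k + 1)) := by
  rw [altMinPair, show (2 * k + 1) / 2 = k by omega, show (2 * k + 1 + 1) / 2 = k + 1 by omega]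

theorem altMinPair_succ (k : ℕ) :
    altMinPair A v (k + 1) = ((altMinPair A v k).1, psi A (altMinPair A v k).1) ∨
      altMinPair A v (k + 1) = (phi A (altMinPair A v k).2, (altMinPair A v k).2) := by
  obtain ⟨k, rfl | rfl⟩ := Nat.even_or_odd' k
  · left
    rw [altMinPair_two_mul_add_one, altMinPair_two_mul]
    rfl
  · right
    rw [show 2 * k + 1 + 1 = 2 * (k + 1) by ring, altMinPair_two_mul, altMinPair_two_mul_add_one]

theorem antitone_Cerr_altMinPair :
    Antitone fun k => Cerr A (altMinPair A v k).1 (altMinPair A v k).2 := by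
  refine antitone_nat_of_succ_le fun k => ?_
  rcases altMinPair_succ A v k with h | h <;> rw [h]
  · exact Cerr_psi_le A _ _
  · exact Cerr_phi_le A _ _

variable {A v}

theorem cheb_vseq (hA : PreservesCheb A) (hv : Cheb v) (k : ℕ) : Cheb (vseq A v k) := by
  induction k with
  | zero => exact hv
  | succ k ih => exact hA.2 _ (hA.1 _ ih)

theorem cheb_altMinPair (hA : PreservesCheb A) (hv : Cheb v) (k : ℕ) :
    Cheb (altMinPair A v k).1 ∧ Cheb (altMinPair A v k).2 :=
  ⟨hA.1 _ (cheb_vseq hA hv _), cheb_vseq hA hv _⟩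

/-- The errors decrease along the iterates, and their even-indexed subsequence converges to the
initial error. -/
theorem Cerr_altMinPair_eq
    (hlim : Tendsto (fun k => Cerr A (phi A (vseq A v k)) (vseq A v k)) atTop
      (nhds (Cerr A (phi A v) v))) (k : ℕ) :
    Cerr A (altMinPair A v k).1 (altMinPair A v k).2 = Cerr A (phi A v) v := by
  have hanti := antitone_Cerr_altMinPair A v
  have heven : ∀ k, Cerr A (phi A (vseq A v k)) (vseq A v k) =
      Cerr A (altMinPair A v (2 * k)).1 (altMinPair A v (2 * k)).2 := fun k => by
    rw [altMinPair_two_mul]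
  have hlim' : Tendsto (fun k => Cerr A (altMinPair A v (2 * k)).1 (altMinPair A v (2 * k)).2)
      atTop (nhds (Cerr A (phi A v) v)) := by simpa only [heven] using hlim
  refine le_antisymm ?_ ?_
  · simpa only [altMinPair_zero] using hanti k.zero_le
  · calc Cerr A (phi A v) v ≤ Cerr A (altMinPair A v (2 * k)).1 (altMinPair A v (2 * k)).2 :=
          (hanti.comp_monotone (monotone_id.const_mul' 2)).le_of_tendsto hlim' k
      _ ≤ _ := hanti (by omega)

theorem tSetRefines_altMinPair_succ (hA : PreservesCheb A) (hv : Cheb v)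
    (hlim : Tendsto (fun k => Cerr A (phi A (vseq A v k)) (vseq A v k)) atTop
      (nhds (Cerr A (phi A v) v))) (k : ℕ) :
    TSetRefines A (altMinPair A v (k + 1)) (altMinPair A v k) := by
  have hE := (Cerr_altMinPair_eq hlim (k + 1)).trans (Cerr_altMinPair_eq hlim k).symm
  rcases altMinPair_succ A v k with h | h <;> rw [h] at hE ⊢
  · exact tSetRefines_psi (cheb_altMinPair hA hv k).1 hE
  · exact tSetRefines_phi (cheb_altMinPair hA hv k).2 hE

theorem tSetRefines_altMinPair (hA : PreservesCheb A) (hv : Cheb v)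
    (hlim : Tendsto (fun k => Cerr A (phi A (vseq A v k)) (vseq A v k)) atTop
      (nhds (Cerr A (phi A v) v))) (k : ℕ) :
    TSetRefines A (altMinPair A v k) (phi A v, v) := by
  induction k with
  | zero => rw [altMinPair_zero]; exact TSetRefines.refl _
  | succ k ih => exact (tSetRefines_altMinPair_succ hA hv hlim k).trans ih

end AlternatingMinimization

section Alternance

variable {m n : ℕ} {A : Fin m → Fin n → ℝ} {v : Fin n → ℝ}

theorem antitone_TSet_altMinPair (hA : PreservesCheb A) (hv : Cheb v)
    (hlim : Tendsto (fun k => Cerr A (phi A (vseq A v k)) (vseq A v k)) atTop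
      (nhds (Cerr A (phi A v) v))) :
    Antitone fun k => TSet A (altMinPair A v k).1 (altMinPair A v k).2 :=
  antitone_nat_of_succ_le fun k p hp => (tSetRefines_altMinPair_succ hA hv hlim k p hp).1

theorem tau_ne_zero_of_mem_TSet {u : Fin m → ℝ} (hu : Cheb u) (hv : Cheb v)
    (hpos : 0 < Cerr A u v) {p : Fin m × Fin n} (hp : p ∈ TSet A u v) :
    tau A u v p.1 p.2 ≠ 0 := by
  have hres : A p.1 p.2 - u p.1 * v p.2 ≠ 0 := fun h => by
    rw [TSet, Set.mem_ofPred_eq, h, abs_zero] at hp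
    exact hpos.ne hp
  exact Real.sign_eq_zero_iff.not.mpr (mul_ne_zero (mul_ne_zero (hu _) (hv _)) hres)

theorem hasAlternatingCycle_of_Cerr_pos [Nonempty (Fin m)] [Nonempty (Fin n)]
    (hA : PreservesCheb A) (hv : Cheb v)
    (hlim : Tendsto (fun k => Cerr A (phi A (vseq A v k)) (vseq A v k)) atTop
      (nhds (Cerr A (phi A v) v)))
    (hpos : 0 < Cerr A (phi A v) v) :
    HasAlternatingCycle (TSet A (phi A v) v) fun p => tau A (phi A v) v p.1 p.2 := by
  obtain ⟨K, hK⟩ := WellFoundedLT.antitone_chain_condition (antitone_TSet_altMinPair hA hv hlim)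
  have hstable := (hK (2 * K + 1) (by omega)).symm.trans (hK (2 * (K + 1)) (by omega))
  have hcol := tSetRefines_altMinPair hA hv hlim (2 * K + 1)
  have hrow := tSetRefines_altMinPair hA hv hlim (2 * (K + 1))
  have hEcol := Cerr_altMinPair_eq hlim (2 * K + 1)
  have hErow := Cerr_altMinPair_eq hlim (2 * (K + 1))
  rw [altMinPair_two_mul_add_one] at hcol hstable hEcol
  rw [altMinPair_two_mul] at hrow hstable hErow
  set u := phi A (vseq A v K)
  set w := vseq A v (K + 1)
  have hu : Cheb u := hA.1 _ (cheb_vseq hA hv K)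
  have hw : Cheb w := cheb_vseq hA hv (K + 1)
  refine (hasAlternatingCycle_of_forall_exists_neg (Set.toFinite (TSet A u w))
    (TSet_nonempty A u w) (fun p hp => ?_) (fun p hp => ?_) (fun p hp => ?_)).mono
    fun p hp => (hcol p hp).1
  · exact tau_ne_zero_of_mem_TSet (hA.1 v hv) hv hpos (hcol p hp).1
  · rw [hstable] at hp ⊢
    obtain ⟨j, hj, hτ⟩ := exists_mem_TSet_tau_eq_neg_of_phi hw (hErow ▸ hpos) hp
    exact ⟨j, hj, (hrow.tau_eq hj).symm.trans (hτ.trans (congrArg Neg.neg (hrow.tau_eq hp)))⟩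
  · obtain ⟨i, hi, hτ⟩ := exists_mem_TSet_tau_eq_neg_of_psi hu (hEcol ▸ hpos) hp
    exact ⟨i, hi, (hcol.tau_eq hi).symm.trans (hτ.trans (congrArg Neg.neg (hcol.tau_eq hp)))⟩

theorem hasAlternatingCycle_of_Cerr_eq_zero [Nontrivial (Fin m)] [Nontrivial (Fin n)]
    {u : Fin m → ℝ} (h : Cerr A u v = 0) :
    HasAlternatingCycle (TSet A u v) fun p => tau A u v p.1 p.2 := by
  have hres : ∀ i j, A i j - u i * v j = 0 := fun i j =>
    abs_nonpos_iff.mp (h ▸ abs_sub_le_Cerr A u v i j)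
  have hT : TSet A u v = Set.univ := Set.eq_univ_of_forall fun p => by
    rw [TSet, Set.mem_ofPred_eq, hres, abs_zero, h]
  have hτ : (fun p : Fin m × Fin n => tau A u v p.1 p.2) = 0 := funext fun p => by
    rw [tau, hres, mul_zero, Real.sign_zero, Pi.zero_apply]
  rw [hT, hτ]
  exact hasAlternatingCycle_univ_zero

end Alternance

theorem stmt17 {m n : ℕ} (hm : 2 ≤ m) (hn : 2 ≤ n) (A : Fin m → Fin n → ℝ)
    (hA : PreservesCheb A) (v : Fin n → ℝ) (hv : Cheb v)
    (hlim : Filter.Tendsto (fun k => Cerr A (phi A (vseq A v k)) (vseq A v k)) atTop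
      (nhds (Cerr A (phi A v) v))) :
    ∃ k : ℕ, 2 ≤ k ∧ ∃ (r : ℕ → Fin m) (c : ℕ → Fin n), c k = c 0 ∧
      (∀ s t : ℕ, s < k → t < k → ∀ bs bt : Bool,
        ((r s, if bs then c (s + 1) else c s) : Fin m × Fin n) =
          (r t, if bt then c (t + 1) else c t) → s = t ∧ bs = bt) ∧
      (∀ s < k, (r s, c s) ∈ TSet A (phi A v) v ∧ (r s, c (s + 1)) ∈ TSet A (phi A v) v) ∧
      ∃ ε : ℝ, ∀ s < k,
        tau A (phi A v) v (r s) (c s) = ε ∧ tau A (phi A v) v (r s) (c (s + 1)) = -ε := by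
  have : Nontrivial (Fin m) := Fin.nontrivial_iff_two_le.mpr hm
  have : Nontrivial (Fin n) := Fin.nontrivial_iff_two_le.mpr hn
  rcases (Cerr_nonneg A (phi A v) v).eq_or_lt with hzero | hpos
  · exact hasAlternatingCycle_of_Cerr_eq_zero hzero.symm
  · exact hasAlternatingCycle_of_Cerr_pos hA hv hlim hpos
end
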